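/- arXiv:2312.07195 — 11 statements merged into one kernel-verified Lean document; each statement's English description precedes it below -/
import Mathlib

section
/- For every fair division instance with n agents, a finite set M of items, and monotone nondecreasing integer-valued valuations v_1, …, v_n with v_i(∅) = 0, there exists an EQx allocation, i.e., an allocation (A_1, …, A_n) such that for all agents i, j and every item g ∈ A_j, v_j(A_j \ {g}) ≤ v_i(A_i). -/
/-!
Give each agent the key (value of its bundle, size of its bundle), ordered lexicographically,
and take an allocation maximising the least key, then minimising the number of agents that
attain it. If `v j (A j \ {g})` exceeded the value of an agent `i₀` of least key, moving `g`
from `j` to `i₀` would lift the keys of both `i₀` (larger bundle, value not lower by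
monotonicity) and `j` strictly above the least key, leaving all other keys unchanged: a better
allocation.
-/

/-- An allocation: pairwise disjoint bundles covering all the items. -/
def IsAllocation {ι : Type*} {n : ℕ} (A : Fin n → Finset ι) : Prop :=
  (∀ i j : Fin n, i ≠ j → Disjoint (A i) (A j)) ∧ ∀ x : ι, ∃ i : Fin n, x ∈ A i

open Finset

section MinWithMultiplicity

variable {κ α : Type*} [Fintype κ] [Nonempty κ] [LinearOrder α]

/-- Ordered so that, at equal minimum, fewer minimisers is better. -/
def minWithMultiplicity (f : κ → α) : α ×ₗ ℕᵒᵈ :=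
  toLex (univ.inf' univ_nonempty f, OrderDual.toDual #{k | f k = univ.inf' univ_nonempty f})

theorem minWithMultiplicity_lt_of_raise_minimizer {f g : κ → α} {i : κ} (hmin : ∀ k, f i ≤ f k)
    (hi : f i < g i) (hg : ∀ k, g k = f k ∨ f i < g k) :
    minWithMultiplicity f < minWithMultiplicity g := by
  have hf : univ.inf' univ_nonempty f = f i :=
    le_antisymm (inf'_le f (mem_univ i)) (le_inf' _ _ fun k _ => hmin k)
  have hle : f i ≤ univ.inf' univ_nonempty g :=
    le_inf' _ _ fun k _ => (hg k).elim (fun h => h ▸ hmin k) le_of_lt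
  rw [minWithMultiplicity, minWithMultiplicity, Prod.Lex.toLex_lt_toLex, hf]
  rcases hle.lt_or_eq with hlt | heq
  · exact .inl hlt
  refine .inr ⟨heq, OrderDual.toDual_lt_toDual.mpr (card_lt_card ?_)⟩
  rw [← heq]
  have hsub : univ.filter (g · = f i) ⊆ univ.filter (f · = f i) := by
    intro k hk
    simp only [mem_filter, mem_univ, true_and] at hk ⊢
    exact (hg k).resolve_right hk.le.not_gt ▸ hk
  exact (ssubset_iff_of_subset hsub).mpr ⟨i, by simp, by simpa using hi.ne'⟩

end MinWithMultiplicity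

section Allocation

variable {ι : Type*} {n : ℕ}

theorem isAllocation_ite_univ [Fintype ι] (i : Fin n) :
    IsAllocation fun k => if k = i then (univ : Finset ι) else ∅ := by
  refine ⟨fun k l hkl => ?_, fun x => ⟨i, by simp⟩⟩
  by_cases hk : k = i
  · simp [hk, Ne.symm (hk ▸ hkl)]
  · simp [hk]

theorem IsAllocation.notMem_of_mem {A : Fin n → Finset ι} (hA : IsAllocation A) {g : ι}
    {j k : Fin n} (hg : g ∈ A j) (hk : k ≠ j) : g ∉ A k :=
  disjoint_left.mp (hA.1 j k hk.symm) hg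

variable [DecidableEq ι]

def giveItem (A : Fin n → Finset ι) (g : ι) (i : Fin n) : Fin n → Finset ι :=
  fun k => if k = i then insert g (A k) else (A k).erase g

@[simp]
theorem giveItem_self (A : Fin n → Finset ι) (g : ι) (i : Fin n) :
    giveItem A g i i = insert g (A i) :=
  if_pos rfl

theorem giveItem_of_ne (A : Fin n → Finset ι) (g : ι) {i k : Fin n} (hk : k ≠ i) :
    giveItem A g i k = (A k).erase g :=
  if_neg hk

theorem IsAllocation.giveItem {A : Fin n → Finset ι} (hA : IsAllocation A) (g : ι) (i : Fin n) :
    IsAllocation (giveItem A g i) := by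
  refine ⟨fun k l hkl => ?_, fun x => ?_⟩
  · have erase_disj : ∀ {k l}, k ≠ l → Disjoint (insert g (A k)) ((A l).erase g) := fun hkl =>
      disjoint_insert_left.mpr ⟨notMem_erase g _, (hA.1 _ _ hkl).mono_right (erase_subset _ _)⟩
    by_cases hk : k = i
    · subst hk
      rw [giveItem_self, giveItem_of_ne _ _ hkl.symm]
      exact erase_disj hkl
    by_cases hl : l = i
    · subst hl
      rw [giveItem_self, giveItem_of_ne _ _ hkl]
      exact (erase_disj hkl.symm).symm
    rw [giveItem_of_ne _ _ hk, giveItem_of_ne _ _ hl]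
    exact (hA.1 k l hkl).mono (erase_subset _ _) (erase_subset _ _)
  · by_cases hx : x = g
    · exact ⟨i, by simp [hx]⟩
    obtain ⟨k, hk⟩ := hA.2 x
    refine ⟨k, ?_⟩
    unfold _root_.giveItem
    split_ifs <;> simp [hk, hx]

def bundleKey (v : Fin n → Finset ι → ℤ) (A : Fin n → Finset ι) (k : Fin n) : ℤ ×ₗ ℕ :=
  toLex (v k (A k), #(A k))

theorem exists_allocation_minWithMultiplicity_lt [NeZero n] {v : Fin n → Finset ι → ℤ}
    (hmono : ∀ (i : Fin n) (S : Finset ι) (x : ι), v i S ≤ v i (insert x S))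
    {A : Fin n → Finset ι} (hA : IsAllocation A) {i j : Fin n} {g : ι} (hg : g ∈ A j)
    (hviol : v i (A i) < v j ((A j).erase g)) :
    ∃ A', IsAllocation A' ∧
      minWithMultiplicity (bundleKey v A) < minWithMultiplicity (bundleKey v A') := by
  obtain ⟨i₀, hi₀⟩ := Finite.exists_min (bundleKey v A)
  have hlt : v i₀ (A i₀) < v j ((A j).erase g) :=
    (Prod.Lex.monotone_fst _ _ (hi₀ i)).trans_lt hviol
  have hj : j ≠ i₀ := by
    rintro rfl
    have := hmono j ((A j).erase g) g
    rw [insert_erase hg] at this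
    exact hlt.not_ge this
  have hraise : bundleKey v A i₀ < bundleKey v (giveItem A g i₀) i₀ := by
    have hcard : #(A i₀) < #(insert g (A i₀)) := by
      rw [card_insert_of_notMem (hA.notMem_of_mem hg hj.symm)]
      exact Nat.lt_succ_self _
    simpa [bundleKey] using
      Prod.Lex.toLex_strictMono (Prod.mk_lt_mk_of_le_of_lt (hmono i₀ (A i₀) g) hcard)
  refine ⟨giveItem A g i₀, hA.giveItem g i₀, minWithMultiplicity_lt_of_raise_minimizer hi₀ hraise ?_⟩
  intro k
  by_cases hki : k = i₀
  · exact .inr (hki ▸ hraise)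
  by_cases hkj : k = j
  · subst hkj
    refine .inr (Prod.Lex.toLex_lt_toLex.mpr (.inl ?_))
    simpa [giveItem_of_ne _ _ hki] using hlt
  · left
    simp [bundleKey, giveItem_of_ne _ _ hki, erase_eq_of_notMem (hA.notMem_of_mem hg hkj)]

end Allocation

theorem eqx_exists_monotone_nondecreasing_general
    {ι : Type*} [Fintype ι] [DecidableEq ι] {n : ℕ} (hn : 0 < n)
    (v : Fin n → Finset ι → ℤ)
    (hmono : ∀ (i : Fin n) (S : Finset ι) (x : ι), v i S ≤ v i (insert x S)) :
    ∃ A : Fin n → Finset ι, IsAllocation A ∧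
      ∀ i j : Fin n, ∀ g ∈ A j, v j ((A j).erase g) ≤ v i (A i) := by
  have : NeZero n := ⟨hn.ne'⟩
  have : Nonempty {A : Fin n → Finset ι // IsAllocation A} := ⟨⟨_, isAllocation_ite_univ 0⟩⟩
  obtain ⟨⟨A, hA⟩, hmax⟩ := Finite.exists_max fun A : {A // IsAllocation A} =>
    minWithMultiplicity (bundleKey v A.1)
  refine ⟨A, hA, fun i j g hg => le_of_not_gt fun hviol => ?_⟩
  obtain ⟨A', hA', hlt⟩ := exists_allocation_minWithMultiplicity_lt hmono hA hg hviol
  exact (hmax ⟨A', hA'⟩).not_gt hlt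

/-- For every fair division instance with `n` agents, a finite set of items and monotone
nondecreasing integer-valued valuations with `v i ∅ = 0`, there exists an EQx allocation. -/
theorem eqx_exists_monotone_nondecreasing
    {ι : Type*} [Fintype ι] [DecidableEq ι] {n : ℕ} (hn : 0 < n)
    (v : Fin n → Finset ι → ℤ)
    (hzero : ∀ i, v i ∅ = 0)
    (hmono : ∀ (i : Fin n) (S : Finset ι) (x : ι), v i S ≤ v i (insert x S)) :
    ∃ A : Fin n → Finset ι, IsAllocation A ∧
      ∀ i j : Fin n, ∀ g ∈ A j, v j ((A j).erase g) ≤ v i (A i) :=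
  eqx_exists_monotone_nondecreasing_general hn v hmono
end

section
/- For every fair division instance with n agents, a finite set M of items, and monotone nonincreasing integer-valued valuations v_1, …, v_n with v_i(∅) = 0, there exists an EQx allocation, i.e., an allocation (A_1, …, A_n) such that for all agents i, j and every item c ∈ A_i, v_i(A_i \ {c}) ≥ v_j(A_j). -/
/-- For every fair division instance with `n` agents, a finite set of items and monotone
nonincreasing integer-valued valuations with `v i ∅ = 0`, there exists an EQx allocation. -/
theorem eqx_exists_monotone_nonincreasing
    {ι : Type*} [Fintype ι] [DecidableEq ι] {n : ℕ} (hn : 0 < n)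
    (v : Fin n → Finset ι → ℤ)
    (hzero : ∀ i, v i ∅ = 0)
    (hmono : ∀ (i : Fin n) (S : Finset ι) (x : ι), v i (insert x S) ≤ v i S) :
    ∃ A : Fin n → Finset ι, IsAllocation A ∧
      ∀ i j : Fin n, ∀ c ∈ A i, v i ((A i).erase c) ≥ v j (A j) := by
  classical
  -- erase increases value
  have herase : ∀ (i : Fin n) (S : Finset ι) (c : ι), c ∈ S → v i S ≤ v i (S.erase c) := by
    intro i S c hc
    have h1 : insert c (S.erase c) = S := Finset.insert_erase hc
    have := hmono i (S.erase c) c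
    rwa [h1] at this
  set K : ℤ := (Fintype.card ι : ℤ) with hK
  set s : (Fin n → Finset ι) → Fin n → ℤ :=
    fun A k => (K + 1) * v k (A k) - ((A k).card : ℤ) with hs
  set Φ : (Fin n → Finset ι) → ℚ := fun A => ∑ k, (3 : ℚ) ^ (s A k) with hΦ
  have hfin : {A : Fin n → Finset ι | IsAllocation A}.Finite := Set.toFinite _
  have hne : {A : Fin n → Finset ι | IsAllocation A}.Nonempty := by
    refine ⟨fun k => if k = ⟨0, hn⟩ then Finset.univ else ∅, ?_, ?_⟩
    · intro i j hij
      by_cases hi : i = ⟨0, hn⟩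
      · have hj : j ≠ ⟨0, hn⟩ := by rw [hi] at hij; exact fun h => hij h.symm
        simp [hi, hj]
      · simp [hi]
    · intro x; exact ⟨⟨0, hn⟩, by simp⟩
  obtain ⟨A, hA, hmin⟩ := Set.exists_min_image _ Φ hfin hne
  refine ⟨A, hA, ?_⟩
  by_contra h
  push_neg at h
  obtain ⟨i, j, c, hc, hlt⟩ := h
  -- i ≠ j
  have hmonAi : v i (A i) ≤ v i ((A i).erase c) := herase i (A i) c hc
  have hij : i ≠ j := by
    rintro rfl
    exact absurd hmonAi (not_le.mpr hlt)
  -- the improved allocation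
  set A' : Fin n → Finset ι :=
    Function.update (Function.update A i ((A i).erase c)) j (insert c (A j)) with hA'
  have hA'i : A' i = (A i).erase c := by
    simp [hA', Function.update_of_ne hij, Function.update_self]
  have hA'j : A' j = insert c (A j) := by simp [hA']
  have hA'k : ∀ k, k ≠ i → k ≠ j → A' k = A k := by
    intro k hki hkj
    simp [hA', Function.update_of_ne hkj, Function.update_of_ne hki]
  have hcj : c ∉ A j := fun hcj => Finset.disjoint_left.mp (hA.1 i j hij) hc hcj
  -- A' is an allocation
  have hA'alloc : IsAllocation A' := by
    constructor
    · intro a b hab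
      have key : ∀ a b : Fin n, a ≠ b → a ≠ j → Disjoint (A' a) (A' b) := by
        intro a b hab haj
        have hsub : A' a ⊆ A a := by
          by_cases ha : a = i
          · subst ha; rw [hA'i]; exact Finset.erase_subset _ _
          · rw [hA'k a ha haj]
        by_cases hb : b = j
        · rw [hb, hA'j, Finset.disjoint_insert_right]
          constructor
          · intro hca
            by_cases ha : a = i
            · rw [ha, hA'i] at hca; exact (Finset.notMem_erase c (A i)) hca
            · exact Finset.disjoint_left.mp (hA.1 a i ha) (hsub hca) hc
          · exact Finset.disjoint_of_subset_left hsub (hA.1 a j (hb ▸ hab))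
        · have hsubb : A' b ⊆ A b := by
            by_cases hbi : b = i
            · subst hbi; rw [hA'i]; exact Finset.erase_subset _ _
            · rw [hA'k b hbi hb]
          exact Finset.disjoint_of_subset_left hsub
            (Finset.disjoint_of_subset_right hsubb (hA.1 a b hab))
      by_cases hbj : a = j
      · subst hbj
        exact (key b a (Ne.symm hab) (Ne.symm hab)).symm
      · exact key a b hab hbj
    · intro x
      obtain ⟨k, hk⟩ := hA.2 x
      by_cases hki : k = i
      · subst hki
        by_cases hx : x = c
        · exact ⟨j, by rw [hA'j, hx]; exact Finset.mem_insert_self c (A j)⟩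
        · exact ⟨k, by rw [hA'i]; exact Finset.mem_erase.mpr ⟨hx, hk⟩⟩
      · by_cases hkj : k = j
        · subst hkj
          exact ⟨k, by rw [hA'j]; exact Finset.mem_insert_of_mem hk⟩
        · exact ⟨k, by rw [hA'k k hki hkj]; exact hk⟩
  -- key integer inequalities
  have hcardj : ((A j).card : ℤ) ≤ K := by
    rw [hK]; exact_mod_cast Finset.card_le_univ (A j)
  have hcardi : (1 : ℤ) ≤ ((A i).card : ℤ) := by
    exact_mod_cast Finset.card_pos.mpr ⟨c, hc⟩
  have hKpos : (0 : ℤ) < K + 1 := by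
    have : (0:ℤ) ≤ K := Int.ofNat_nonneg _
    linarith
  have hsj' : s A' j ≤ s A j - 1 := by
    have h1 : v j (A' j) ≤ v j (A j) := by rw [hA'j]; exact hmono j (A j) c
    have h2 : ((A' j).card : ℤ) = ((A j).card : ℤ) + 1 := by
      rw [hA'j, Finset.card_insert_of_notMem hcj]; push_cast; ring
    have h3 : (K + 1) * v j (A' j) ≤ (K + 1) * v j (A j) :=
      mul_le_mul_of_nonneg_left h1 (le_of_lt hKpos)
    simp only [hs]
    omega
  have hsi' : s A' i ≤ s A j - 1 := by
    have h1 : v i (A' i) ≤ v j (A j) - 1 := by rw [hA'i]; omega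
    have h2 : ((A' i).card : ℤ) = ((A i).card : ℤ) - 1 := by
      rw [hA'i, Finset.card_erase_of_mem hc]
      omega
    have h3 : (K + 1) * v i (A' i) ≤ (K + 1) * (v j (A j) - 1) :=
      mul_le_mul_of_nonneg_left h1 (le_of_lt hKpos)
    simp only [hs]
    nlinarith [hKpos, hcardi, hcardj]
  -- Φ decreases
  have h3pos : (0 : ℚ) < 3 := by norm_num
  have h3one : (1 : ℚ) < 3 := by norm_num
  have hzle : ∀ m m' : ℤ, m ≤ m' → (3:ℚ) ^ m ≤ (3:ℚ) ^ m' :=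
    fun m m' h => zpow_le_zpow_right₀ h3one.le h
  have hzpos : ∀ m : ℤ, (0:ℚ) < (3:ℚ) ^ m := fun m => zpow_pos h3pos m
  have hΦlt : Φ A' < Φ A := by
    have hsplit : ∀ B : Fin n → Finset ι,
        Φ B = (3:ℚ) ^ (s B i) + ((3:ℚ) ^ (s B j)
          + ∑ k ∈ (Finset.univ.erase i).erase j, (3:ℚ) ^ (s B k)) := by
      intro B
      show ∑ k, (3 : ℚ) ^ (s B k) = _
      rw [← Finset.add_sum_erase _ _ (Finset.mem_univ i)]
      congr 1
      rw [← Finset.add_sum_erase _ _ (Finset.mem_erase.mpr ⟨Ne.symm hij, Finset.mem_univ j⟩)]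
    rw [hsplit A', hsplit A]
    have hrest : ∑ k ∈ (Finset.univ.erase i).erase j, (3:ℚ) ^ (s A' k)
        = ∑ k ∈ (Finset.univ.erase i).erase j, (3:ℚ) ^ (s A k) := by
      apply Finset.sum_congr rfl
      intro k hk
      have hkj : k ≠ j := (Finset.mem_erase.mp hk).1
      have hki : k ≠ i := (Finset.mem_erase.mp (Finset.mem_erase.mp hk).2).1
      rw [hs]; simp only []
      rw [hA'k k hki hkj]
    have e1 : (3:ℚ) ^ (s A' i) ≤ (3:ℚ) ^ (s A j - 1) := hzle _ _ hsi'
    have e2 : (3:ℚ) ^ (s A' j) ≤ (3:ℚ) ^ (s A j - 1) := hzle _ _ hsj'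
    have e3 : (3:ℚ) ^ (s A j) = 3 * (3:ℚ) ^ (s A j - 1) := by
      have hexp : s A j = (s A j - 1) + 1 := by ring
      rw [hexp, zpow_add_one₀ (by norm_num : (3:ℚ) ≠ 0)]
      ring
    have e4 : (0:ℚ) < (3:ℚ) ^ (s A i) := hzpos _
    have e5 : (0:ℚ) < (3:ℚ) ^ (s A j - 1) := hzpos _
    rw [hrest]
    linarith
  exact absurd (hmin A' hA'alloc) (not_le.mpr hΦlt)
end

section
/- For every fair division instance with n agents, a finite set M of items, monotone nondecreasing integer-valued valuations v_1, …, v_n with v_i(∅) = 0, and every rational ε with 0 < ε < 1, there exists a (1−ε)-EQx allocation, i.e., an allocation (A_1, …, A_n) such that for all agents i, j and every item g ∈ A_j, (1−ε) · v_j(A_j \ {g}) ≤ v_i(A_i) (as rationals). -/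
open Finset

section Allocation

variable {ι : Type*} {n : ℕ} {A : Fin n → Finset ι}

theorem IsAllocation.eq_of_mem (hA : IsAllocation A) {x : ι} {i j : Fin n} (hi : x ∈ A i)
    (hj : x ∈ A j) : i = j :=
  by_contra fun hij => disjoint_left.1 (hA.1 i j hij) hi hj

theorem exists_isAllocation [Fintype ι] (hn : 0 < n) : ∃ A : Fin n → Finset ι, IsAllocation A := by
  classical
  refine ⟨fun k => if k = ⟨0, hn⟩ then univ else ∅, fun k l hkl => ?_, fun x => ⟨⟨0, hn⟩, by simp⟩⟩
  by_cases hk : k = ⟨0, hn⟩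
  · simp [hk, show l ≠ ⟨0, hn⟩ from fun hl => hkl (hk.trans hl.symm)]
  · simp [hk]

variable [DecidableEq ι]

def transfer (A : Fin n → Finset ι) (g : ι) (i : Fin n) : Fin n → Finset ι :=
  fun k => if k = i then insert g (A k) else (A k).erase g

theorem mem_transfer {g x : ι} {i k : Fin n} :
    x ∈ transfer A g i k ↔ if x = g then k = i else x ∈ A k := by
  unfold transfer
  split_ifs <;> simp_all

theorem transfer_self (g : ι) (i : Fin n) : transfer A g i i = insert g (A i) := by
  simp [transfer]

theorem transfer_of_ne {g : ι} {i k : Fin n} (hki : k ≠ i) : transfer A g i k = (A k).erase g := by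
  simp [transfer, hki]

theorem IsAllocation.transfer_of_ne (hA : IsAllocation A) {g : ι} {i j k : Fin n} (hg : g ∈ A j)
    (hki : k ≠ i) (hkj : k ≠ j) : transfer A g i k = A k := by
  rw [_root_.transfer_of_ne hki, erase_eq_of_notMem fun hgk => hkj (hA.eq_of_mem hgk hg)]

theorem IsAllocation.transfer (hA : IsAllocation A) (g : ι) (i : Fin n) :
    IsAllocation (transfer A g i) := by
  refine ⟨fun k l hkl => disjoint_left.2 fun x hk hl => ?_, fun x => ?_⟩
  · rw [mem_transfer] at hk hl
    split_ifs at hk hl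
    · exact hkl (hk.trans hl.symm)
    · exact hkl (hA.eq_of_mem hk hl)
  · by_cases hx : x = g
    · exact ⟨i, by simp [mem_transfer, hx]⟩
    · obtain ⟨k, hk⟩ := hA.2 x
      exact ⟨k, by simp [mem_transfer, hx, hk]⟩

end Allocation

theorem sum_three_zpow_neg_lt {κ : Type*} [Fintype κ] {f f' : κ → ℤ} {i j : κ} (hij : i ≠ j)
    (hrest : ∀ k, k ≠ i → k ≠ j → f' k = f k) (hi : f i < f' i) (hj : f i < f' j) :
    ∑ k, (3 : ℚ) ^ (-f' k) < ∑ k, (3 : ℚ) ^ (-f k) := by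
  have hsplit : ∑ k, ((3 : ℚ) ^ (-f' k) - 3 ^ (-f k)) =
      ((3 : ℚ) ^ (-f' i) - 3 ^ (-f i)) + ((3 : ℚ) ^ (-f' j) - 3 ^ (-f j)) :=
    Fintype.sum_eq_add i j hij fun k hk => by simp [hrest k hk.1 hk.2]
  have hthird : ∀ z, f i < z → (3 : ℚ) ^ (-z) ≤ 3 ^ (-f i) / 3 := fun z hz => by
    rw [div_eq_mul_inv, ← zpow_sub_one₀ three_ne_zero]
    exact zpow_le_zpow_right₀ (by norm_num) (by omega)
  have hpos_i : (0 : ℚ) < 3 ^ (-f i) := zpow_pos three_pos _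
  have hpos_j : (0 : ℚ) < 3 ^ (-f j) := zpow_pos three_pos _
  rw [sum_sub_distrib] at hsplit
  linarith [hthird _ hi, hthird _ hj]

section EQx

variable {ι : Type*} [Fintype ι] [DecidableEq ι] {n : ℕ} (v : Fin n → Finset ι → ℤ)

def IsEQx (A : Fin n → Finset ι) : Prop :=
  ∀ i j : Fin n, ∀ g ∈ A j, v j ((A j).erase g) ≤ v i (A i)

/-- Encodes (value, size) lexicographically, as a bundle has at most `card ι` items. -/
def lexKey (A : Fin n → Finset ι) (k : Fin n) : ℤ :=
  v k (A k) * (Fintype.card ι + 1) + #(A k)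

def potential (A : Fin n → Finset ι) : ℚ :=
  ∑ k, (3 : ℚ) ^ (-lexKey v A k)

variable {v}

theorem potential_transfer_lt (hmono : ∀ k, Monotone (v k)) {A : Fin n → Finset ι}
    (hA : IsAllocation A) {i j : Fin n} {g : ι} (hg : g ∈ A j)
    (hviol : v i (A i) < v j ((A j).erase g)) :
    potential v (transfer A g i) < potential v A := by
  have hij : i ≠ j := by
    rintro rfl
    exact (hmono i (erase_subset g (A i))).not_gt hviol
  have hgi : g ∉ A i := fun hgi => hij (hA.eq_of_mem hgi hg)
  refine sum_three_zpow_neg_lt hij (fun k hki hkj => ?_) ?_ ?_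
  · simp only [lexKey, hA.transfer_of_ne hg hki hkj]
  · have hvalue := hmono i (subset_insert g (A i))
    simp only [lexKey, transfer_self, card_insert_of_notMem hgi]
    push_cast
    nlinarith
  · have hsize : #(A i) ≤ Fintype.card ι := card_le_univ (A i)
    simp only [lexKey, transfer_of_ne hij.symm]
    nlinarith

theorem exists_isAllocation_isEQx (hn : 0 < n) (hmono : ∀ k, Monotone (v k)) :
    ∃ A : Fin n → Finset ι, IsAllocation A ∧ IsEQx v A := by
  classical
  obtain ⟨A₀, hA₀⟩ := exists_isAllocation (ι := ι) hn
  obtain ⟨A, hA, hmin⟩ :=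
    (univ.filter IsAllocation).exists_min_image (potential v) ⟨A₀, by simpa using hA₀⟩
  simp only [mem_filter, mem_univ, true_and] at hA hmin
  refine ⟨A, hA, fun i j g hg => not_lt.1 fun hviol => ?_⟩
  exact (potential_transfer_lt hmono hA hg hviol).not_ge (hmin _ (hA.transfer g i))

end EQx

theorem approx_eqx_exists_monotone_nondecreasing_general
    {ι : Type*} [Fintype ι] [DecidableEq ι] {n : ℕ} (hn : 0 < n)
    (v : Fin n → Finset ι → ℤ)
    (hzero : ∀ i, v i ∅ = 0)
    (hmono : ∀ (i : Fin n) (S : Finset ι) (x : ι), v i S ≤ v i (insert x S))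
    (ε : ℚ) (hε0 : 0 < ε) :
    ∃ A : Fin n → Finset ι, IsAllocation A ∧
      ∀ i j : Fin n, ∀ g ∈ A j,
        (1 - ε) * ((v j ((A j).erase g) : ℚ)) ≤ ((v i (A i) : ℚ)) := by
  have hmono' : ∀ i, Monotone (v i) := fun i =>
    monotone_iff_forall_le_insert.2 fun S x _ => hmono i S x
  obtain ⟨A, hA, hEQx⟩ := exists_isAllocation_isEQx hn hmono'
  refine ⟨A, hA, fun i j g hg => ?_⟩
  have hnonneg : (0 : ℚ) ≤ v j ((A j).erase g) := by
    have h := hmono' j (empty_subset ((A j).erase g))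
    rw [hzero j] at h
    exact_mod_cast h
  have hle : (v j ((A j).erase g) : ℚ) ≤ v i (A i) := by exact_mod_cast hEQx i j g hg
  nlinarith

/-- For every fair division instance with monotone nondecreasing integer-valued valuations and
every rational `ε ∈ (0,1)`, a `(1-ε)`-EQx allocation exists. -/
theorem approx_eqx_exists_monotone_nondecreasing
    {ι : Type*} [Fintype ι] [DecidableEq ι] {n : ℕ} (hn : 0 < n)
    (v : Fin n → Finset ι → ℤ)
    (hzero : ∀ i, v i ∅ = 0)
    (hmono : ∀ (i : Fin n) (S : Finset ι) (x : ι), v i S ≤ v i (insert x S))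
    (ε : ℚ) (hε0 : 0 < ε) (hε1 : ε < 1) :
    ∃ A : Fin n → Finset ι, IsAllocation A ∧
      ∀ i j : Fin n, ∀ g ∈ A j,
        (1 - ε) * ((v j ((A j).erase g) : ℚ)) ≤ ((v i (A i) : ℚ)) :=
  approx_eqx_exists_monotone_nondecreasing_general hn v hzero hmono ε hε0
end

section
/- Let a_1, …, a_M be positive integers. Consider the two-agent fair division instance with items x_1, x_2, g_1, …, g_M and additive valuations: v_1(x_1) = 1, v_2(x_1) = −1; v_1(x_2) = −1, v_2(x_2) = 1; and v_1(g_j) = v_2(g_j) = 2·a_j for each j ∈ {1, …, M}. Then there exists a subset S ⊆ {1, …, M} with ∑_{j∈S} a_j = ∑_{j∉S} a_j if and only if this instance admits an EQx allocation. -/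
/-- EQx for additive (possibly mixed) valuations given by per-item values. -/
def IsEQxMixed {ι : Type*} {n : ℕ} (v : Fin n → ι → ℤ) (A : Fin n → Finset ι) : Prop :=
  ∀ i j : Fin n,
    (∀ x ∈ A j, 0 ≤ v j x → (∑ y ∈ A j, v j y) - v j x ≤ ∑ y ∈ A i, v i y) ∧
    (∀ x ∈ A i, v i x < 0 → (∑ y ∈ A i, v i y) - v i x ≥ ∑ y ∈ A j, v j y)

/-- The valuations of the reduction from Partition: item `Sum.inl 0` is `x₁` (worth `1` to
agent 0 and `-1` to agent 1), item `Sum.inl 1` is `x₂` (worth `-1` to agent 0 and `1` to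
agent 1), and item `Sum.inr j` is the good `g_j`, worth `2 * a j` to both agents. -/
def partitionVal {M : ℕ} (a : Fin M → ℤ) : Fin 2 → (Fin 2 ⊕ Fin M) → ℤ :=
  fun i => Sum.elim (fun k : Fin 2 => if i = k then (1 : ℤ) else -1) (fun j => 2 * a j)

open Finset

namespace Finset

variable {α β : Type*} [Fintype α] [Fintype β] [DecidableEq α] [DecidableEq β]

lemma toLeft_compl (u : Finset (α ⊕ β)) : uᶜ.toLeft = u.toLeftᶜ := by
  ext; simp

lemma toRight_compl (u : Finset (α ⊕ β)) : uᶜ.toRight = u.toRightᶜ := by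
  ext; simp

end Finset

lemma isAllocation_two_iff {ι : Type*} [Fintype ι] [DecidableEq ι] {A : Fin 2 → Finset ι} :
    IsAllocation A ↔ A 1 = (A 0)ᶜ := by
  constructor
  · rintro ⟨hdisj, hcover⟩
    ext x
    obtain ⟨i, hi⟩ := hcover x
    have h01 : x ∈ A 0 → x ∉ A 1 := fun hx => disjoint_left.1 (hdisj 0 1 (by decide)) hx
    fin_cases i <;> simp_all
  · intro h
    refine ⟨fun i j hij => ?_, fun x => ?_⟩
    · fin_cases i <;> fin_cases j <;> simp_all [disjoint_compl_right, disjoint_compl_left]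
    · by_cases hx : x ∈ A 0
      · exact ⟨0, hx⟩
      · exact ⟨1, by simpa [h] using hx⟩

section EQx

variable {ι : Type*} {n : ℕ} {v : Fin n → ι → ℤ} {A : Fin n → Finset ι}

lemma isEQxMixed_of_sum_eq (h : ∀ i j, ∑ y ∈ A i, v i y = ∑ y ∈ A j, v j y) :
    IsEQxMixed v A := by
  intro i j
  refine ⟨fun x _ hx => ?_, fun x _ hx => ?_⟩ <;> linarith [h i j]

lemma IsEQxMixed.sum_le_sum_add_one (h : IsEQxMixed v A) {i j : Fin n} {x : ι}
    (hx : x ∈ A i ∨ x ∈ A j) (hi : v i x = -1) (hj : v j x = 1) :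
    ∑ y ∈ A j, v j y ≤ ∑ y ∈ A i, v i y + 1 := by
  rcases hx with hx | hx
  · linarith [(h i j).2 x hx (by omega)]
  · linarith [(h i j).1 x hx (by omega)]

end EQx

section partitionVal

variable {M : ℕ} (a : Fin M → ℤ)

lemma sum_partitionVal (i : Fin 2) (B : Finset (Fin 2 ⊕ Fin M)) :
    ∑ y ∈ B, partitionVal a i y =
      ∑ k ∈ B.toLeft, (if i = k then 1 else -1) + 2 * ∑ j ∈ B.toRight, a j := by
  conv_lhs => rw [← toLeft_disjSum_toRight (u := B)]
  rw [sum_disjSum, mul_sum]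
  rfl

lemma sum_partitionVal_compl_sub (B : Finset (Fin 2 ⊕ Fin M)) :
    ∑ y ∈ Bᶜ, partitionVal a 1 y - ∑ y ∈ B, partitionVal a 0 y =
      2 * (∑ j ∈ B.toRightᶜ, a j - ∑ j ∈ B.toRight, a j) := by
  have hsmall : ∀ L : Finset (Fin 2), ∑ k ∈ Lᶜ, (if (1 : Fin 2) = k then (1 : ℤ) else -1) =
      ∑ k ∈ L, (if (0 : Fin 2) = k then 1 else -1) := by
    decide
  rw [sum_partitionVal, sum_partitionVal, toLeft_compl, toRight_compl, hsmall]
  ring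

end partitionVal

theorem partition_iff_eqx_general (M : ℕ) (a : Fin M → ℤ) :
    (∃ S : Finset (Fin M), ∑ j ∈ S, a j = ∑ j ∈ Sᶜ, a j) ↔
    ∃ A : Fin 2 → Finset (Fin 2 ⊕ Fin M),
      IsAllocation A ∧ IsEQxMixed (partitionVal a) A := by
  constructor
  · rintro ⟨S, hS⟩
    set B : Finset (Fin 2 ⊕ Fin M) := ({0} : Finset (Fin 2)).disjSum S
    have hB := sum_partitionVal_compl_sub a B
    rw [toRight_disjSum, ← hS, sub_self, mul_zero, sub_eq_zero] at hB
    refine ⟨![B, Bᶜ], isAllocation_two_iff.2 rfl, isEQxMixed_of_sum_eq ?_⟩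
    simp [Fin.forall_fin_two, hB]
  · rintro ⟨A, hA, hEQx⟩
    rw [isAllocation_two_iff] at hA
    have hcover (x) : x ∈ A 1 ∨ x ∈ A 0 := by
      rw [hA, mem_compl]
      exact em' _
    have h₁ := hEQx.sum_le_sum_add_one (i := 1) (j := 0) (hcover (Sum.inl 0)) rfl rfl
    have h₂ := hEQx.sum_le_sum_add_one (i := 0) (j := 1) (hcover (Sum.inl 1)).symm rfl rfl
    have hdiff := sum_partitionVal_compl_sub a (A 0)
    rw [← hA] at hdiff
    exact ⟨(A 0).toRight, by omega⟩

/-- The Partition instance `a` has a solution iff the constructed two-agent fair division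
instance admits an EQx allocation. -/
theorem partition_iff_eqx (M : ℕ) (a : Fin M → ℤ) (ha : ∀ j, 0 < a j) :
    (∃ S : Finset (Fin M), ∑ j ∈ S, a j = ∑ j ∈ Sᶜ, a j) ↔
    ∃ A : Fin 2 → Finset (Fin 2 ⊕ Fin M),
      IsAllocation A ∧ IsEQxMixed (partitionVal a) A :=
  partition_iff_eqx_general M a
end

section
/- Let a_1, …, a_M be positive integers and consider the two-agent instance with items x_1, x_2, g_1, …, g_M and additive valuations: v_1(x_1) = 1, v_2(x_1) = −1; v_1(x_2) = −1, v_2(x_2) = 1; and v_1(g_j) = v_2(g_j) = 2·a_j for each j. Then every EQx allocation (A_1, A_2) of this instance satisfies v_1(A_1) = v_2(A_2), and moreover v_1(A_1 \ {x_1, x_2}) = v_2(A_2 \ {x_1, x_2}). -/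
/-- In the Partition-reduction instance, every EQx allocation gives both agents equal value,
and moreover equal value after removing the items `x₁, x₂`. -/
theorem eqx_allocation_equal_values (M : ℕ) (a : Fin M → ℤ) (ha : ∀ j, 0 < a j)
    (A : Fin 2 → Finset (Fin 2 ⊕ Fin M))
    (hA : IsAllocation A) (hEQx : IsEQxMixed (partitionVal a) A) :
    (∑ x ∈ A 0, partitionVal a 0 x = ∑ x ∈ A 1, partitionVal a 1 x) ∧
    (∑ x ∈ A 0 \ {Sum.inl 0, Sum.inl 1}, partitionVal a 0 x =
      ∑ x ∈ A 1 \ {Sum.inl 0, Sum.inl 1}, partitionVal a 1 x) := by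
  classical
  set v := partitionVal a with hv
  obtain ⟨hdisj, hcov⟩ := hA
  have hd01 : Disjoint (A 0) (A 1) := hdisj 0 1 (by decide)
  set t : Finset (Fin 2 ⊕ Fin M) := {Sum.inl 0, Sum.inl 1} with ht
  -- value simp facts
  have hv00 : v 0 (Sum.inl 0) = 1 := by simp [hv, partitionVal]
  have hv01 : v 0 (Sum.inl 1) = -1 := by simp [hv, partitionVal]
  have hv10 : v 1 (Sum.inl 0) = -1 := by simp [hv, partitionVal]
  have hv11 : v 1 (Sum.inl 1) = 1 := by simp [hv, partitionVal]
  -- membership cases for the two special items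
  have hmem : ∀ k : Fin 2,
      (Sum.inl k ∈ A 0 ∧ Sum.inl k ∉ A 1) ∨ (Sum.inl k ∈ A 1 ∧ Sum.inl k ∉ A 0) := by
    intro k
    obtain ⟨i, hi⟩ := hcov (Sum.inl k)
    fin_cases i
    · exact Or.inl ⟨hi, Finset.disjoint_left.mp hd01 hi⟩
    · exact Or.inr ⟨hi, Finset.disjoint_right.mp hd01 hi⟩
  -- parity of the "goods" parts
  have hpar : ∀ i : Fin 2, 2 ∣ ∑ x ∈ A i \ t, v i x := by
    intro i
    refine Finset.dvd_sum ?_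
    intro x hx
    rcases x with k | j
    · exfalso
      have hk : k = 0 ∨ k = 1 := by omega
      have := (Finset.mem_sdiff.mp hx).2
      rcases hk with rfl | rfl <;> simp [ht] at this
    · exact ⟨a j, by simp [hv, partitionVal]⟩
  -- sum splitting
  have hsplit : ∀ i : Fin 2, ∑ x ∈ A i, v i x = ∑ x ∈ A i \ t, v i x + ∑ x ∈ A i ∩ t, v i x := by
    intro i
    rw [add_comm, Finset.sum_inter_add_sum_sdiff]
  have hne : (Sum.inl 0 : Fin 2 ⊕ Fin M) ≠ Sum.inl 1 := by simp
  have hG0 := hpar 0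
  have hG1 := hpar 1
  have hS0 := hsplit 0
  have hS1 := hsplit 1
  rcases hmem 0 with ⟨h0a, h0b⟩ | ⟨h0a, h0b⟩ <;> rcases hmem 1 with ⟨h1a, h1b⟩ | ⟨h1a, h1b⟩
  · -- inl 0 ∈ A 0, inl 1 ∈ A 0
    have e0 : A 0 ∩ t = {Sum.inl 0, Sum.inl 1} := by
      ext x
      simp only [Finset.mem_inter, ht, Finset.mem_insert, Finset.mem_singleton]
      constructor
      · rintro ⟨_, h⟩; exact h
      · rintro (rfl | rfl); exacts [⟨h0a, Or.inl rfl⟩, ⟨h1a, Or.inr rfl⟩]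
    have e1 : A 1 ∩ t = ∅ := by
      ext x
      simp only [Finset.mem_inter, ht, Finset.mem_insert, Finset.mem_singleton,
        Finset.notMem_empty, iff_false, not_and]
      rintro hx (rfl | rfl); exacts [h0b hx, h1b hx]
    rw [e0, Finset.sum_pair hne, hv00, hv01] at hS0
    rw [e1, Finset.sum_empty] at hS1
    -- inequalities: inl 0 good for 0 in A 0; inl 1 chore for 0 in A 0
    have i1 := (hEQx 1 0).1 (Sum.inl 0) h0a (by rw [hv00]; norm_num)
    have i2 := (hEQx 0 1).2 (Sum.inl 1) h1a (by rw [hv01]; norm_num)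
    rw [hv00] at i1
    rw [hv01] at i2
    constructor <;> omega
  · -- inl 0 ∈ A 0, inl 1 ∈ A 1
    have e0 : A 0 ∩ t = {Sum.inl 0} := by
      ext x
      simp only [Finset.mem_inter, ht, Finset.mem_insert, Finset.mem_singleton]
      constructor
      · rintro ⟨hx, rfl | rfl⟩; exacts [rfl, absurd hx h1b]
      · rintro rfl; exact ⟨h0a, Or.inl rfl⟩
    have e1 : A 1 ∩ t = {Sum.inl 1} := by
      ext x
      simp only [Finset.mem_inter, ht, Finset.mem_insert, Finset.mem_singleton]
      constructor
      · rintro ⟨hx, rfl | rfl⟩; exacts [absurd hx h0b, rfl]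
      · rintro rfl; exact ⟨h1a, Or.inr rfl⟩
    rw [e0, Finset.sum_singleton, hv00] at hS0
    rw [e1, Finset.sum_singleton, hv11] at hS1
    have i1 := (hEQx 1 0).1 (Sum.inl 0) h0a (by rw [hv00]; norm_num)
    have i2 := (hEQx 0 1).1 (Sum.inl 1) h1a (by rw [hv11]; norm_num)
    rw [hv00] at i1
    rw [hv11] at i2
    constructor <;> omega
  · -- inl 0 ∈ A 1, inl 1 ∈ A 0
    have e0 : A 0 ∩ t = {Sum.inl 1} := by
      ext x
      simp only [Finset.mem_inter, ht, Finset.mem_insert, Finset.mem_singleton]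
      constructor
      · rintro ⟨hx, rfl | rfl⟩; exacts [absurd hx h0b, rfl]
      · rintro rfl; exact ⟨h1a, Or.inr rfl⟩
    have e1 : A 1 ∩ t = {Sum.inl 0} := by
      ext x
      simp only [Finset.mem_inter, ht, Finset.mem_insert, Finset.mem_singleton]
      constructor
      · rintro ⟨hx, rfl | rfl⟩; exacts [rfl, absurd hx h1b]
      · rintro rfl; exact ⟨h0a, Or.inl rfl⟩
    rw [e0, Finset.sum_singleton, hv01] at hS0
    rw [e1, Finset.sum_singleton, hv10] at hS1
    -- inl 0 chore for 1 in A 1; inl 1 chore for 0 in A 0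
    have i1 := (hEQx 1 0).2 (Sum.inl 0) h0a (by rw [hv10]; norm_num)
    have i2 := (hEQx 0 1).2 (Sum.inl 1) h1a (by rw [hv01]; norm_num)
    rw [hv10] at i1
    rw [hv01] at i2
    constructor <;> omega
  · -- inl 0 ∈ A 1, inl 1 ∈ A 1
    have e0 : A 0 ∩ t = ∅ := by
      ext x
      simp only [Finset.mem_inter, ht, Finset.mem_insert, Finset.mem_singleton,
        Finset.notMem_empty, iff_false, not_and]
      rintro hx (rfl | rfl); exacts [h0b hx, h1b hx]
    have e1 : A 1 ∩ t = {Sum.inl 0, Sum.inl 1} := by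
      ext x
      simp only [Finset.mem_inter, ht, Finset.mem_insert, Finset.mem_singleton]
      constructor
      · rintro ⟨_, h⟩; exact h
      · rintro (rfl | rfl); exacts [⟨h0a, Or.inl rfl⟩, ⟨h1a, Or.inr rfl⟩]
    rw [e0, Finset.sum_empty] at hS0
    rw [e1, Finset.sum_pair hne, hv10, hv11] at hS1
    -- inl 0 chore for 1 in A 1; inl 1 good for 1 in A 1
    have i1 := (hEQx 1 0).2 (Sum.inl 0) h0a (by rw [hv10]; norm_num)
    have i2 := (hEQx 0 1).1 (Sum.inl 1) h1a (by rw [hv11]; norm_num)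
    rw [hv10] at i1
    rw [hv11] at i2
    constructor <;> omega
end

section
/- Let n be a positive integer, a_1, …, a_{3n} positive integers with ∑_{j=1}^{3n} a_j = n·T and T/4 < a_j < T/2 for all j, and let D be a positive integer with D > 10·n·T. Consider the instance with n+1 agents and 3n+2 items, with additive valuations: for each original agent i ∈ {1, …, n}, v_i(x_j) = a_j for j ∈ {1, …, 3n}, v_i(x_{3n+1}) = D, and v_i(x_{3n+2}) = −D; for agent n+1, v_{n+1}(x_j) = −10·D for j ∈ {1, …, 3n}, v_{n+1}(x_{3n+1}) = T, and v_{n+1}(x_{3n+2}) = 1. Then this instance admits an EQx allocation if and only if {1, …, 3n} can be partitioned into n pairwise disjoint subsets S_1, …, S_n with ∑_{j∈S_i} a_j = T for every i. -/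
/-- The valuations of the reduction from 3-Partition: items `Sum.inl j` are the original items
`x_j` (`j ∈ {1, …, 3n}`), item `Sum.inr 0` is `x_{3n+1}` and item `Sum.inr 1` is `x_{3n+2}`.
Each original agent `i < n` values `x_j` at `a j`, `x_{3n+1}` at `D` and `x_{3n+2}` at `-D`;
the last agent values each `x_j` at `-10 * D`, `x_{3n+1}` at `T` and `x_{3n+2}` at `1`. -/
def threePartitionVal (n : ℕ) (T : ℤ) (a : Fin (3 * n) → ℤ) (D : ℤ) :
    Fin (n + 1) → (Fin (3 * n) ⊕ Fin 2) → ℤ :=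
  fun i =>
    if (i : ℕ) < n then
      Sum.elim (fun j => a j) (fun k : Fin 2 => if k = 0 then D else -D)
    else
      Sum.elim (fun _ => -(10 * D)) (fun k : Fin 2 => if k = 0 then T else 1)

/-!
An EQx allocation cannot give the last agent an item `x_j`: its bundle would then be worth about
`-10D`, below what any original agent keeps after dropping a good, and if the original agents hold
no goods at all the last agent holds every `x_j` and still falls short after dropping one chore.
Next, `x_{3n+1}` (worth `D` to original agents) and `x_{3n+2}` (worth `-D`) must both go to the
last agent, whose bundle is then worth `T + 1`. Dropping its good `x_{3n+2}` shows every original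
share is at least `T`; as the shares sum to `nT`, each is exactly `T`. Conversely, handing `S_i` to
agent `i` and both special items to the last agent allocates only goods, with values `T` and
`T + 1`, which is EQx.
-/

open Finset Sum

namespace IsAllocation

variable {ι : Type*} {n : ℕ}

lemma eq_of_mem_s7 {A : Fin n → Finset ι} (hA : IsAllocation A) {x : ι} {i j : Fin n}
    (hi : x ∈ A i) (hj : x ∈ A j) : i = j := by
  by_contra h
  exact disjoint_left.mp (hA.1 i j h) hi hj

lemma sum_sum [Fintype ι] {M : Type*} [AddCommMonoid M] {A : Fin n → Finset ι}
    (hA : IsAllocation A) (f : ι → M) : ∑ i, ∑ x ∈ A i, f x = ∑ x, f x := by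
  classical
  rw [← sum_biUnion fun i _ j _ h => hA.1 i j h]
  congr
  ext x
  simpa using hA.2 x

lemma toLeft_castSucc {α β : Type*} {A : Fin (n + 1) → Finset (α ⊕ β)} (hA : IsAllocation A)
    (hL : (A (Fin.last n)).toLeft = ∅) : IsAllocation fun i : Fin n => (A i.castSucc).toLeft := by
  refine ⟨fun i j hij => disjoint_left.mpr fun x hi hj => ?_, fun x => ?_⟩
  · exact hij (Fin.castSucc_injective _ (hA.eq_of_mem_s7 (mem_toLeft.1 hi) (mem_toLeft.1 hj)))
  · obtain ⟨p, hp⟩ := hA.2 (inl x)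
    rcases p.eq_castSucc_or_eq_last with ⟨i, rfl⟩ | rfl
    · exact ⟨i, mem_toLeft.2 hp⟩
    · simp [← mem_toLeft, hL] at hp

end IsAllocation

def addAgent {α β : Type*} [Fintype β] {n : ℕ} (S : Fin n → Finset α) :
    Fin (n + 1) → Finset (α ⊕ β) :=
  Fin.lastCases (univ.map .inr) fun i => (S i).map .inl

lemma IsAllocation.addAgent {α β : Type*} [Fintype β] {n : ℕ} {S : Fin n → Finset α}
    (hS : IsAllocation S) : IsAllocation (addAgent (β := β) S) := by
  refine ⟨fun i j hij => ?_, ?_⟩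
  · induction i using Fin.lastCases <;> induction j using Fin.lastCases <;>
      simp_all [_root_.addAgent, disjoint_map_inl_map_inr, (disjoint_map_inl_map_inr _ _).symm,
        hS.1]
  · rintro (x | x)
    · obtain ⟨i, hi⟩ := hS.2 x
      exact ⟨i.castSucc, by simpa [_root_.addAgent] using hi⟩
    · exact ⟨Fin.last n, by simp [_root_.addAgent]⟩

lemma IsEQxMixed.of_forall_pos {ι : Type*} {n : ℕ} {v : Fin n → ι → ℤ} {A : Fin n → Finset ι}
    (c : ℤ) (hlo : ∀ i, c ≤ ∑ y ∈ A i, v i y) (hhi : ∀ i, ∑ y ∈ A i, v i y ≤ c + 1)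
    (hpos : ∀ i, ∀ x ∈ A i, 0 < v i x) : IsEQxMixed v A := fun i j =>
  ⟨fun x hx _ => by linarith [hlo i, hhi j, hpos j x hx],
    fun x hx hneg => absurd hneg (hpos i x hx).not_gt⟩

lemma Finset.sum_eq_sum_toLeft_add_ite {α M : Type*} [DecidableEq α] [AddCommMonoid M]
    (f : α ⊕ Fin 2 → M) (B : Finset (α ⊕ Fin 2)) :
    ∑ y ∈ B, f y = ∑ j ∈ B.toLeft, f (inl j) +
      ((if inr 0 ∈ B then f (inr 0) else 0) + (if inr 1 ∈ B then f (inr 1) else 0)) := by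
  conv_lhs => rw [← toLeft_disjSum_toRight (u := B)]
  rw [sum_disjSum, ← univ_inter B.toRight, ← sum_ite_mem, Fin.sum_univ_two]
  simp [mem_toRight]

section Reduction

variable {n : ℕ} {T : ℤ} {a : Fin (3 * n) → ℤ} {D : ℤ}

@[simp]
lemma threePartitionVal_castSucc_inl (i : Fin n) (j : Fin (3 * n)) :
    threePartitionVal n T a D i.castSucc (inl j) = a j := by
  simp [threePartitionVal]

@[simp]
lemma threePartitionVal_castSucc_inr_zero (i : Fin n) :
    threePartitionVal n T a D i.castSucc (inr 0) = D := by
  simp [threePartitionVal]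

@[simp]
lemma threePartitionVal_castSucc_inr_one (i : Fin n) :
    threePartitionVal n T a D i.castSucc (inr 1) = -D := by
  simp [threePartitionVal]

@[simp]
lemma threePartitionVal_last_inl (j : Fin (3 * n)) :
    threePartitionVal n T a D (Fin.last n) (inl j) = -(10 * D) := by
  simp [threePartitionVal]

@[simp]
lemma threePartitionVal_last_inr_zero : threePartitionVal n T a D (Fin.last n) (inr 0) = T := by
  simp [threePartitionVal]

@[simp]
lemma threePartitionVal_last_inr_one : threePartitionVal n T a D (Fin.last n) (inr 1) = 1 := by
  simp [threePartitionVal]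

lemma sum_threePartitionVal_castSucc (i : Fin n) (B : Finset (Fin (3 * n) ⊕ Fin 2)) :
    ∑ y ∈ B, threePartitionVal n T a D i.castSucc y =
      ∑ j ∈ B.toLeft, a j + ((if inr 0 ∈ B then D else 0) + (if inr 1 ∈ B then -D else 0)) := by
  simp [sum_eq_sum_toLeft_add_ite]

lemma sum_threePartitionVal_last (B : Finset (Fin (3 * n) ⊕ Fin 2)) :
    ∑ y ∈ B, threePartitionVal n T a D (Fin.last n) y =
      #B.toLeft * -(10 * D) + ((if inr 0 ∈ B then T else 0) + (if inr 1 ∈ B then 1 else 0)) := by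
  simp [sum_eq_sum_toLeft_add_ite]

lemma neg_le_sum_threePartitionVal_castSucc (ha : ∀ j, 0 ≤ a j) (hD : 0 ≤ D) (i : Fin n)
    (B : Finset (Fin (3 * n) ⊕ Fin 2)) : -D ≤ ∑ y ∈ B, threePartitionVal n T a D i.castSucc y := by
  rw [sum_threePartitionVal_castSucc]
  have := sum_nonneg fun j (_ : j ∈ B.toLeft) => ha j
  split_ifs <;> linarith

variable {A : Fin (n + 1) → Finset (Fin (3 * n) ⊕ Fin 2)}

lemma toLeft_last_eq_empty_of_isEQx (hn : 0 < n) (ha : ∀ j, 0 ≤ a j) (hT : 0 ≤ T) (hTD : T < D)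
    (hA : IsAllocation A) (hEQ : IsEQxMixed (threePartitionVal n T a D) A) :
    (A (Fin.last n)).toLeft = ∅ := by
  have hD : 0 ≤ D := by linarith
  by_contra hne
  obtain ⟨j₀, hj₀⟩ := nonempty_iff_ne_empty.2 hne
  have hwL (k : ℤ) (hk : k ≤ #(A (Fin.last n)).toLeft) :
      ∑ y ∈ A (Fin.last n), threePartitionVal n T a D (Fin.last n) y ≤ k * -(10 * D) + (T + 1) := by
    rw [sum_threePartitionVal_last]
    have : (#(A (Fin.last n)).toLeft : ℤ) * -(10 * D) ≤ k * -(10 * D) :=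
      mul_le_mul_of_nonpos_right hk (by linarith)
    split_ifs <;> linarith
  -- A bundle without one of its goods is worth at least `-D` to an original agent, more than
  -- the last agent's bundle is worth once it holds an item `x_j`.
  have hnot : ∀ (i : Fin n) j, inl j ∉ A i.castSucc := by
    intro i j hj
    have h := (hEQ (Fin.last n) i.castSucc).1 _ hj (by simpa using ha j)
    rw [← sum_erase_eq_sub hj] at h
    linarith [neg_le_sum_threePartitionVal_castSucc (T := T) ha hD i
      ((A i.castSucc).erase (inl j)), hwL 1 (by exact_mod_cast card_pos.2 ⟨j₀, hj₀⟩)]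
  have hall : (A (Fin.last n)).toLeft = univ := by
    refine eq_univ_of_forall fun j => mem_toLeft.2 ?_
    obtain ⟨p, hp⟩ := hA.2 (inl j)
    rcases p.eq_castSucc_or_eq_last with ⟨i, rfl⟩ | rfl
    · exact absurd hp (hnot i j)
    · exact hp
  have h := (hEQ (Fin.last n) (Fin.castSucc ⟨0, hn⟩)).2 _ (mem_toLeft.1 hj₀)
    (by rw [threePartitionVal_last_inl]; linarith)
  have h2 : 2 ≤ #(A (Fin.last n)).toLeft := by
    rw [hall, card_univ, Fintype.card_fin]
    omega
  rw [threePartitionVal_last_inl] at h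
  linarith [hwL 2 (by exact_mod_cast h2), neg_le_sum_threePartitionVal_castSucc (T := T) ha hD
    ⟨0, hn⟩ (A (Fin.castSucc ⟨0, hn⟩))]

lemma inr_zero_mem_last_of_isEQx (hn : 0 < n) (hpos : ∀ j, 0 < a j) (hsum : ∑ j, a j = n * T)
    (hT : 0 < T) (hhigh : ∀ j, 2 * a j < T) (hD : n * T < D) (hA : IsAllocation A)
    (hEQ : IsEQxMixed (threePartitionVal n T a D) A) (hL : (A (Fin.last n)).toLeft = ∅) :
    inr 0 ∈ A (Fin.last n) := by
  have hS := hA.toLeft_castSucc hL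
  have hle (i : Fin n) : ∑ j ∈ (A i.castSucc).toLeft, a j ≤ n * T :=
    hsum ▸ sum_le_univ_sum_of_nonneg fun j => (hpos j).le
  have hsumS : ∑ i : Fin n, ∑ j ∈ (A i.castSucc).toLeft, a j = n * T := (hS.sum_sum a).trans hsum
  obtain ⟨m, -, hm⟩ : ∃ m ∈ (univ : Finset (Fin n)), T ≤ ∑ j ∈ (A m.castSucc).toLeft, a j :=
    exists_le_of_sum_le ⟨⟨0, hn⟩, mem_univ _⟩ (by simp [hsumS])
  obtain ⟨x, hx⟩ : ((A m.castSucc).toLeft).Nonempty :=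
    nonempty_of_sum_ne_zero (hT.trans_le hm).ne'
  have hD0 : 0 < D := (mul_nonneg (Nat.cast_nonneg n) hT.le).trans_lt hD
  by_contra h₀
  obtain ⟨p, hp⟩ := hA.2 (inr 0)
  obtain ⟨c, rfl⟩ : ∃ c : Fin n, p = c.castSucc :=
    p.eq_castSucc_or_eq_last.resolve_right fun h => h₀ (h ▸ hp)
  have hmem_iff {i j : Fin n} {y} (hi : y ∈ A i.castSucc) : y ∈ A j.castSucc ↔ j = i :=
    ⟨fun hj => Fin.castSucc_injective _ (hA.eq_of_mem_s7 hj hi), fun h => h ▸ hi⟩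
  by_cases hd : ∃ d ≠ c, inr 1 ∈ A d.castSucc
  · -- Dropping the chore `x_{3n+2}` lifts `d` only to its share `≤ nT < D`, while `c` holds
    -- `x_{3n+1}`, worth `D`.
    obtain ⟨d, hdc, hd⟩ := hd
    have h := (hEQ d.castSucc c.castSucc).2 _ hd (by simpa using hD0)
    rw [sum_threePartitionVal_castSucc, sum_threePartitionVal_castSucc] at h
    simp only [hmem_iff hp, hmem_iff hd, hdc, hdc.symm, if_true, if_false,
      threePartitionVal_castSucc_inr_one] at h
    linarith [hle d, sum_nonneg fun j (_ : j ∈ (A c.castSucc).toLeft) => (hpos j).le]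
  · -- Now the last agent is worth at most `1`, while `m`, whose share `≥ T` consists of items
    -- worth `< T / 2`, keeps more than `1` after dropping one of them.
    push Not at hd
    have hwL : ∑ y ∈ A (Fin.last n), threePartitionVal n T a D (Fin.last n) y ≤ 1 := by
      rw [sum_threePartitionVal_last, hL]
      simp only [card_empty, if_neg h₀]
      split_ifs <;> simp
    have hwm : ∑ j ∈ (A m.castSucc).toLeft, a j ≤
        ∑ y ∈ A m.castSucc, threePartitionVal n T a D m.castSucc y := by
      rw [sum_threePartitionVal_castSucc]
      by_cases hmc : m = c
      · subst hmc
        split_ifs <;> linarith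
      · simp only [(hmem_iff hp).not.2 hmc, if_false]
        split_ifs with h₁
        · exact absurd h₁ (hd m hmc)
        · simp
    have h := (hEQ (Fin.last n) m.castSucc).1 _ (mem_toLeft.1 hx) (by simpa using (hpos x).le)
    rw [threePartitionVal_castSucc_inl] at h
    linarith [hhigh x, hpos x]

lemma inr_one_mem_last_of_isEQx (hpos : ∀ j, 0 < a j) (hsum : ∑ j, a j = n * T) (hT : 0 ≤ T)
    (hD : n * T < D) (hA : IsAllocation A) (hEQ : IsEQxMixed (threePartitionVal n T a D) A)
    (hL : (A (Fin.last n)).toLeft = ∅) (h₀ : inr 0 ∈ A (Fin.last n)) :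
    inr 1 ∈ A (Fin.last n) := by
  by_contra h₁
  obtain ⟨p, hp⟩ := hA.2 (inr 1)
  obtain ⟨d, rfl⟩ : ∃ d : Fin n, p = d.castSucc :=
    p.eq_castSucc_or_eq_last.resolve_right fun h => h₁ (h ▸ hp)
  have h₀d : inr 0 ∉ A d.castSucc := fun h => Fin.castSucc_ne_last d (hA.eq_of_mem_s7 h h₀)
  have h := (hEQ d.castSucc (Fin.last n)).1 _ h₀ (by simpa using hT)
  rw [sum_threePartitionVal_last, sum_threePartitionVal_castSucc, hL] at h
  simp only [card_empty, Nat.cast_zero, if_pos h₀, if_neg h₁, if_neg h₀d, if_pos hp,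
    threePartitionVal_last_inr_zero] at h
  have : ∑ j ∈ (A d.castSucc).toLeft, a j ≤ n * T :=
    hsum ▸ sum_le_univ_sum_of_nonneg fun j => (hpos j).le
  linarith

lemma exists_threePartition_of_isEQx (hn : 0 < n) (hpos : ∀ j, 0 < a j)
    (hsum : ∑ j, a j = n * T) (hT : 0 < T) (hhigh : ∀ j, 2 * a j < T) (hD : n * T < D)
    (hA : IsAllocation A) (hEQ : IsEQxMixed (threePartitionVal n T a D) A) :
    ∃ S : Fin n → Finset (Fin (3 * n)), IsAllocation S ∧ ∀ i, ∑ j ∈ S i, a j = T := by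
  have hTD : T < D := lt_of_le_of_lt (le_mul_of_one_le_left hT.le (by exact_mod_cast hn)) hD
  have hL := toLeft_last_eq_empty_of_isEQx hn (fun j => (hpos j).le) hT.le hTD hA hEQ
  have h₀ := inr_zero_mem_last_of_isEQx hn hpos hsum hT hhigh hD hA hEQ hL
  have h₁ := inr_one_mem_last_of_isEQx hpos hsum hT.le hD hA hEQ hL h₀
  have hS := hA.toLeft_castSucc hL
  have hge (i : Fin n) : T ≤ ∑ j ∈ (A i.castSucc).toLeft, a j := by
    have h := (hEQ i.castSucc (Fin.last n)).1 _ h₁ (by simp)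
    have hnot (k : Fin 2) (hk : inr k ∈ A (Fin.last n)) : inr k ∉ A i.castSucc :=
      fun h => Fin.castSucc_ne_last i (hA.eq_of_mem_s7 h hk)
    rw [sum_threePartitionVal_last, sum_threePartitionVal_castSucc, hL] at h
    simp only [card_empty, Nat.cast_zero, if_pos h₀, if_pos h₁, if_neg (hnot 0 h₀),
      if_neg (hnot 1 h₁), threePartitionVal_last_inr_one] at h
    linarith
  have hall := (sum_eq_sum_iff_of_le (s := univ) fun i _ => hge i).1
    (by simpa using ((hS.sum_sum a).trans hsum).symm)
  exact ⟨_, hS, fun i => (hall i (mem_univ i)).symm⟩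

lemma isEQx_addAgent (hpos : ∀ j, 0 < a j) (hT : 0 < T) {S : Fin n → Finset (Fin (3 * n))}
    (hS : ∀ i, ∑ j ∈ S i, a j = T) :
    IsEQxMixed (threePartitionVal n T a D) (addAgent S) := by
  refine .of_forall_pos T (fun p => ?_) (fun p => ?_) fun p => ?_ <;>
    induction p using Fin.lastCases <;> simp [addAgent, hS, hpos, hT]

end Reduction

theorem threePartition_iff_eqx_general (n : ℕ) (hn : 0 < n) (T : ℤ) (a : Fin (3 * n) → ℤ)
    (hpos : ∀ j, 0 < a j)
    (hsum : ∑ j, a j = n * T)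
    (hhigh : ∀ j, 2 * a j < T)
    (D : ℤ) (hD : 10 * n * T < D) :
    (∃ A : Fin (n + 1) → Finset (Fin (3 * n) ⊕ Fin 2),
        IsAllocation A ∧ IsEQxMixed (threePartitionVal n T a D) A) ↔
    (∃ S : Fin n → Finset (Fin (3 * n)),
        (∀ i j : Fin n, i ≠ j → Disjoint (S i) (S j)) ∧
        (∀ x : Fin (3 * n), ∃ i : Fin n, x ∈ S i) ∧
        ∀ i : Fin n, ∑ j ∈ S i, a j = T) := by
  have hT : 0 < T := by
    have := hpos ⟨0, by omega⟩
    linarith [hhigh ⟨0, by omega⟩]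
  constructor
  · rintro ⟨A, hA, hEQ⟩
    have hnT : n * T < D := by
      have := mul_nonneg (Nat.cast_nonneg n) hT.le
      linarith
    obtain ⟨S, ⟨hdisj, hcover⟩, hS⟩ := exists_threePartition_of_isEQx hn hpos hsum hT hhigh hnT
      hA hEQ
    exact ⟨S, hdisj, hcover, hS⟩
  · rintro ⟨S, hdisj, hcover, hS⟩
    exact ⟨addAgent S, IsAllocation.addAgent ⟨hdisj, hcover⟩, isEQx_addAgent hpos hT hS⟩

/-- The 3-Partition instance has a solution iff the constructed fair division instance with
`n + 1` agents admits an EQx allocation. -/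
theorem threePartition_iff_eqx (n : ℕ) (hn : 0 < n) (T : ℤ) (a : Fin (3 * n) → ℤ)
    (hpos : ∀ j, 0 < a j)
    (hsum : ∑ j, a j = n * T)
    (hlow : ∀ j, T < 4 * a j) (hhigh : ∀ j, 2 * a j < T)
    (D : ℤ) (hDpos : 0 < D) (hD : 10 * n * T < D) :
    (∃ A : Fin (n + 1) → Finset (Fin (3 * n) ⊕ Fin 2),
        IsAllocation A ∧ IsEQxMixed (threePartitionVal n T a D) A) ↔
    (∃ S : Fin n → Finset (Fin (3 * n)),
        (∀ i j : Fin n, i ≠ j → Disjoint (S i) (S j)) ∧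
        (∀ x : Fin (3 * n), ∃ i : Fin n, x ∈ S i) ∧
        ∀ i : Fin n, ∑ j ∈ S i, a j = T) :=
  threePartition_iff_eqx_general n hn T a hpos hsum hhigh D hD
end

section
/- Let n be a positive integer, a_1, …, a_{3n} positive integers with ∑_{j=1}^{3n} a_j = n·T and T/4 < a_j < T/2 for all j, and let D be a positive integer with D > 10·n·T. Consider the instance with n+1 agents and 3n+2 items, with additive valuations: for each agent i ∈ {1, …, n}, v_i(x_j) = a_j for j ∈ {1, …, 3n}, v_i(x_{3n+1}) = D, and v_i(x_{3n+2}) = −D; for agent n+1, v_{n+1}(x_j) = −10·D for j ∈ {1, …, 3n}, v_{n+1}(x_{3n+1}) = T, and v_{n+1}(x_{3n+2}) = 1. Then in every EQx allocation (A_1, …, A_{n+1}) of this instance, A_{n+1} = {x_{3n+1}, x_{3n+2}} and v_i(A_i) = T for every agent i ∈ {1, …, n}. -/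
private lemma sum_decomp {m : ℕ} (S : Finset (Fin m ⊕ Fin 2)) (f : Fin m ⊕ Fin 2 → ℤ) :
    ∑ x ∈ S, f x = (∑ j ∈ S.toLeft, f (Sum.inl j))
      + ((if Sum.inr 0 ∈ S then f (Sum.inr 0) else 0)
        + (if Sum.inr 1 ∈ S then f (Sum.inr 1) else 0)) := by
  conv_lhs => rw [← Finset.toLeft_disjSum_toRight (u := S),
    ← Finset.map_inl_disjUnion_map_inr, Finset.sum_disjUnion, Finset.sum_map, Finset.sum_map]
  congr 1
  have h1 : ∑ x ∈ S.toRight, f (Function.Embedding.inr x) = ∑ x ∈ S.toRight, f (Sum.inr x) := rfl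
  rw [h1, show S.toRight = Finset.univ ∩ S.toRight from (Finset.univ_inter _).symm,
    ← Finset.sum_ite_mem, Fin.sum_univ_two]
  simp [Finset.mem_toRight]



/-- In every EQx allocation of the 3-Partition reduction instance, the last agent receives
exactly the items `x_{3n+1}` and `x_{3n+2}`, and every original agent has value exactly `T`. -/
theorem eqx_structure_threePartition (n : ℕ) (hn : 0 < n) (T : ℤ) (a : Fin (3 * n) → ℤ)
    (hpos : ∀ j, 0 < a j)
    (hsum : ∑ j, a j = n * T)
    (hlow : ∀ j, T < 4 * a j) (hhigh : ∀ j, 2 * a j < T)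
    (D : ℤ) (hDpos : 0 < D) (hD : 10 * n * T < D)
    (A : Fin (n + 1) → Finset (Fin (3 * n) ⊕ Fin 2))
    (hA : IsAllocation A) (hEQx : IsEQxMixed (threePartitionVal n T a D) A) :
    A (Fin.last n) = {Sum.inr 0, Sum.inr 1} ∧
    ∀ i : Fin (n + 1), (i : ℕ) < n → ∑ x ∈ A i, threePartitionVal n T a D i x = T := by
  classical
  set v := threePartitionVal n T a D with hv
  set L := Fin.last n with hL
  have hLval : (L : ℕ) = n := Fin.val_last n
  have hT3 : 3 ≤ T := by
    have h1 := hpos ⟨0, by omega⟩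
    have h2 := hhigh ⟨0, by omega⟩
    omega
  have hn1 : (1 : ℤ) ≤ (n : ℤ) := by exact_mod_cast hn
  have hTnT : T ≤ (n : ℤ) * T := le_mul_of_one_le_left (by linarith) hn1
  have hnTpos : 0 < (n : ℤ) * T := by nlinarith
  have hDnT : (n : ℤ) * T < D := by nlinarith
  have hDT : 10 * T < D := by nlinarith
  have hvreg : ∀ i : Fin (n + 1), (i : ℕ) < n →
      v i = Sum.elim a (fun k : Fin 2 => if k = 0 then D else -D) := by
    intro i hi
    simp [hv, threePartitionVal, hi]
  have hvL : v L = Sum.elim (fun _ => -(10 * D)) (fun k : Fin 2 => if k = 0 then T else 1) := by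
    have : ¬ ((L : ℕ) < n) := by omega
    simp [hv, threePartitionVal, this]
  have hVreg : ∀ i : Fin (n + 1), (i : ℕ) < n →
      ∑ x ∈ A i, v i x = (∑ j ∈ (A i).toLeft, a j)
        + ((if Sum.inr 0 ∈ A i then D else 0) + (if Sum.inr 1 ∈ A i then (-D) else 0)) := by
    intro i hi
    rw [hvreg i hi, sum_decomp]
    simp
  have hVL : ∑ x ∈ A L, v L x = (-(10 * D)) * ((A L).toLeft.card : ℤ)
      + ((if Sum.inr 0 ∈ A L then T else 0) + (if Sum.inr 1 ∈ A L then 1 else 0)) := by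
    rw [hvL, sum_decomp]
    simp [Finset.sum_const, mul_comm]
  have hdisj : ∀ (x : Fin (3 * n) ⊕ Fin 2) (i j : Fin (n + 1)), x ∈ A i → x ∈ A j → i = j := by
    intro x i j hxi hxj
    by_contra hij
    exact Finset.disjoint_left.mp (hA.1 i j hij) hxi hxj
  have hpart : ∀ f : (Fin (3 * n) ⊕ Fin 2) → ℤ, ∑ i, ∑ x ∈ A i, f x = ∑ x, f x := by
    intro f
    rw [← Finset.sum_biUnion (by intro i _ j _ hij; exact hA.1 i j hij)]
    congr 1
    ext x
    simp only [Finset.mem_biUnion, Finset.mem_univ, true_and, iff_true]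
    exact hA.2 x
  have htot : ∑ i, (∑ j ∈ (A i).toLeft, a j) = (n : ℤ) * T := by
    have h := hpart (Sum.elim a 0)
    have h2 : ∀ i : Fin (n + 1), ∑ x ∈ A i, (Sum.elim a 0) x = ∑ j ∈ (A i).toLeft, a j := by
      intro i; rw [sum_decomp]; simp
    rw [Finset.sum_congr rfl (fun i _ => h2 i)] at h
    rw [h, Fintype.sum_sum_type]
    simp [hsum]
  have hSnn : ∀ i : Fin (n + 1), 0 ≤ ∑ j ∈ (A i).toLeft, a j :=
    fun i => Finset.sum_nonneg fun j _ => (hpos j).le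
  have hSle : ∀ i : Fin (n + 1), (∑ j ∈ (A i).toLeft, a j) ≤ (n : ℤ) * T := by
    intro i
    rw [← htot]
    exact Finset.single_le_sum (f := fun i => ∑ j ∈ (A i).toLeft, a j)
      (fun i _ => hSnn i) (Finset.mem_univ i)
  have hax : ∀ (i : Fin (n + 1)) (x : Fin (3 * n)), x ∈ (A i).toLeft →
      a x ≤ ∑ j ∈ (A i).toLeft, a j :=
    fun i x hx => Finset.single_le_sum (fun j _ => (hpos j).le) hx
  -- Step 1 : the last agent holds no original item
  have hstep1 : ∀ j : Fin (3 * n), Sum.inl j ∉ A L := by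
    by_contra hcon
    push_neg at hcon
    obtain ⟨js, hjs⟩ := hcon
    have hjs' : js ∈ (A L).toLeft := Finset.mem_toLeft.mpr hjs
    have hkpos : (1 : ℤ) ≤ ((A L).toLeft.card : ℤ) := by
      exact_mod_cast Finset.card_pos.mpr ⟨js, hjs'⟩
    have h1a : ∀ i : Fin (n + 1), (i : ℕ) < n → (A i).toLeft = ∅ := by
      intro i hi
      by_contra hne
      obtain ⟨x, hx⟩ := Finset.nonempty_iff_ne_empty.mpr hne
      have hgood := (hEQx L i).1 (Sum.inl x) (Finset.mem_toLeft.mp hx)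
        (by rw [hvreg i hi]; simpa using (hpos x).le)
      rw [hVreg i hi, hVL, hvreg i hi] at hgood
      simp only [Sum.elim_inl] at hgood
      have hmul : -(10 * D) * ((A L).toLeft.card : ℤ) ≤ -(10 * D) * 1 := by nlinarith
      have haxi := hax i x hx
      split_ifs at hgood <;> linarith
    have hall : ∀ j : Fin (3 * n), Sum.inl j ∈ A L := by
      intro j
      obtain ⟨i, hi⟩ := hA.2 (Sum.inl j)
      rcases lt_or_ge (i : ℕ) n with h | h
      · exfalso
        have he := h1a i h
        have : j ∈ (A i).toLeft := Finset.mem_toLeft.mpr hi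
        rw [he] at this
        exact Finset.notMem_empty j this
      · have hiL : i = L := by
          apply Fin.ext
          have := i.isLt
          rw [hLval]
          omega
        rwa [← hiL]
    have hcard : (((A L).toLeft.card : ℤ)) = 3 * (n : ℤ) := by
      have huniv : (A L).toLeft = Finset.univ := by
        ext x
        simp only [Finset.mem_toLeft, Finset.mem_univ, iff_true]
        exact hall x
      rw [huniv, Finset.card_univ]
      simp
    obtain ⟨i0, hi0lt⟩ : ∃ i : Fin (n + 1), (i : ℕ) < n := ⟨⟨0, by omega⟩, hn⟩
    have hchore := (hEQx L i0).2 (Sum.inl js) hjs (by rw [hvL]; simp; linarith)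
    have hrhsge : -D ≤ ∑ x ∈ A i0, v i0 x := by
      rw [hVreg _ hi0lt]
      have := hSnn i0
      split_ifs <;> linarith
    have hvljs : v L (Sum.inl js) = -(10 * D) := by rw [hvL]; simp
    have hVLub : ∑ x ∈ A L, v L x ≤ -(10 * D) * (3 * (n : ℤ)) + (T + 1) := by
      rw [hVL, hcard]; split_ifs <;> linarith
    rw [hvljs] at hchore
    have hnD : D ≤ (n : ℤ) * D := le_mul_of_one_le_left hDpos.le hn1
    linarith only [hchore, hrhsge, hVLub, hnD, hDT, hT3]
  have hALleft : (A L).toLeft = ∅ := by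
    ext x
    simp only [Finset.mem_toLeft, Finset.notMem_empty, iff_false]
    exact hstep1 x
  have hSL0 : (∑ j ∈ (A L).toLeft, a j) = 0 := by rw [hALleft]; simp
  have hcard0 : (((A L).toLeft.card : ℤ)) = 0 := by rw [hALleft]; simp
  have hVL' : ∑ x ∈ A L, v L x
      = (if Sum.inr 0 ∈ A L then T else 0) + (if Sum.inr 1 ∈ A L then 1 else 0) := by
    rw [hVL, hcard0]; ring
  have hreg : ∀ i : Fin (n + 1), i ≠ L → (i : ℕ) < n := by
    intro i hi
    have h1 := i.isLt
    have h2 : (i : ℕ) ≠ n := by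
      intro h
      exact hi (Fin.ext (by rw [h, hLval]))
    omega
  have hregne : ∀ i : Fin (n + 1), (i : ℕ) < n → i ≠ L := by
    intro i hi h
    rw [h, hLval] at hi
    omega
  have hsum_erase : ∑ i ∈ Finset.univ.erase L, (∑ j ∈ (A i).toLeft, a j) = (n : ℤ) * T := by
    rw [← htot, ← Finset.add_sum_erase Finset.univ _ (Finset.mem_univ L), hSL0, zero_add]
  have hcard_erase : (Finset.univ.erase L).card = n := by
    rw [Finset.card_erase_of_mem (Finset.mem_univ L), Finset.card_univ]
    simp
  -- Step 2 : the last agent holds x_{3n+2}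
  have hinr1 : Sum.inr 1 ∈ A L := by
    by_contra hq1
    obtain ⟨q, hq⟩ := hA.2 (Sum.inr 1)
    have hqL : q ≠ L := fun h => hq1 (h ▸ hq)
    have hqlt := hreg q hqL
    obtain ⟨p, hp⟩ := hA.2 (Sum.inr 0)
    rcases eq_or_ne p L with hpL | hpL
    · have h0L : Sum.inr 0 ∈ A L := hpL ▸ hp
      have h0q : Sum.inr 0 ∉ A q := fun h => hqL (hdisj _ q L h h0L)
      have hgood := (hEQx q L).1 (Sum.inr 0) h0L (by rw [hvL]; simp; linarith)
      rw [hVL', hVreg q hqlt, hvL] at hgood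
      simp only [Sum.elim_inr] at hgood
      rw [if_pos h0L, if_neg hq1, if_neg h0q, if_pos hq] at hgood
      norm_num at hgood
      linarith [hSle q]
    · have hplt := hreg p hpL
      rcases eq_or_ne p q with hpq | hpq
      · subst hpq
        have h0L : Sum.inr 0 ∉ A L := fun h => hpL (hdisj _ p L hp h)
        have hVL0 : ∑ x ∈ A L, v L x = 0 := by rw [hVL', if_neg h0L, if_neg hq1]; ring
        have hbound : ∀ i ∈ Finset.univ.erase L, 2 * (∑ j ∈ (A i).toLeft, a j) ≤ T - 1 := by
          intro i hi
          have hilt := hreg i (Finset.ne_of_mem_erase hi)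
          rcases Finset.eq_empty_or_nonempty (A i).toLeft with he | ⟨x, hx⟩
          · rw [he]; simp; linarith
          · have hgood := (hEQx L i).1 (Sum.inl x) (Finset.mem_toLeft.mp hx)
              (by rw [hvreg i hilt]; simpa using (hpos x).le)
            rw [hVreg i hilt, hVL0, hvreg i hilt] at hgood
            simp only [Sum.elim_inl] at hgood
            have hc : (if Sum.inr 0 ∈ A i then D else 0)
                + (if Sum.inr 1 ∈ A i then -D else 0) = 0 := by
              rcases eq_or_ne i p with h | h
              · subst h; rw [if_pos hp, if_pos hq]; ring
              · rw [if_neg (fun hm => h (hdisj _ i p hm hp)),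
                  if_neg (fun hm => h (hdisj _ i p hm hq))]
                ring
            rw [hc] at hgood
            have := hhigh x
            linarith [hax i x hx]
        have hsumle := Finset.sum_le_sum hbound
        rw [← Finset.mul_sum, hsum_erase, Finset.sum_const, hcard_erase, nsmul_eq_mul] at hsumle
        linarith only [hsumle, hnTpos, hn1]
      · have h1p : Sum.inr 1 ∉ A p := fun h => hpq (hdisj _ p q h hq)
        have h0q : Sum.inr 0 ∉ A q := fun h => hpq.symm (hdisj _ q p h hp)
        have hgood := (hEQx q p).1 (Sum.inr 0) hp (by rw [hvreg p hplt]; simp; linarith)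
        rw [hVreg p hplt, hVreg q hqlt, hvreg p hplt] at hgood
        simp only [Sum.elim_inr] at hgood
        rw [if_pos hp, if_neg h1p, if_neg h0q, if_pos hq] at hgood
        norm_num at hgood
        linarith [hSnn p, hSle q]
  -- Step 3 : the last agent holds x_{3n+1}
  have hinr0 : Sum.inr 0 ∈ A L := by
    by_contra hp0
    obtain ⟨p, hp⟩ := hA.2 (Sum.inr 0)
    have hpL : p ≠ L := fun h => hp0 (h ▸ hp)
    have hplt := hreg p hpL
    have hVL1 : ∑ x ∈ A L, v L x = 1 := by rw [hVL', if_neg hp0, if_pos hinr1]; ring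
    have hbound : ∀ i ∈ Finset.univ.erase L, 2 * (∑ j ∈ (A i).toLeft, a j) ≤ T + 1 := by
      intro i hi
      have hilt := hreg i (Finset.ne_of_mem_erase hi)
      have h1i : Sum.inr 1 ∉ A i := fun h => (Finset.ne_of_mem_erase hi) (hdisj _ i L h hinr1)
      rcases Finset.eq_empty_or_nonempty (A i).toLeft with he | ⟨x, hx⟩
      · rw [he]; simp; linarith
      · have hgood := (hEQx L i).1 (Sum.inl x) (Finset.mem_toLeft.mp hx)
          (by rw [hvreg i hilt]; simpa using (hpos x).le)
        rw [hVreg i hilt, hVL1, hvreg i hilt] at hgood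
        simp only [Sum.elim_inl] at hgood
        rw [if_neg h1i] at hgood
        have hc0 : 0 ≤ (if Sum.inr 0 ∈ A i then D else 0) := by split_ifs <;> linarith
        have := hhigh x
        linarith [hax i x hx]
    have hsumle := Finset.sum_le_sum hbound
    rw [← Finset.mul_sum, hsum_erase, Finset.sum_const, hcard_erase, nsmul_eq_mul] at hsumle
    have hfact : 0 ≤ (n : ℤ) * (T - 3) := mul_nonneg (by linarith) (by linarith)
    linarith only [hsumle, hfact, hn1, hnTpos]
  have hAL : A L = {Sum.inr 0, Sum.inr 1} := by
    ext x
    cases x with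
    | inl j => simp [hstep1 j]
    | inr k =>
      have hk : k = 0 ∨ k = 1 := by omega
      rcases hk with rfl | rfl <;> simp [hinr0, hinr1]
  have hVLT : ∑ x ∈ A L, v L x = T + 1 := by rw [hVL', if_pos hinr0, if_pos hinr1]
  have hTleS : ∀ i ∈ Finset.univ.erase L, T ≤ ∑ j ∈ (A i).toLeft, a j := by
    intro i hi
    have hilt := hreg i (Finset.ne_of_mem_erase hi)
    have hgood := (hEQx i L).1 (Sum.inr 1) hinr1 (by rw [hvL]; simp)
    rw [hVLT, hVreg i hilt, hvL] at hgood
    simp only [Sum.elim_inr] at hgood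
    have h0i : Sum.inr 0 ∉ A i := fun h => (Finset.ne_of_mem_erase hi) (hdisj _ i L h hinr0)
    have h1i : Sum.inr 1 ∉ A i := fun h => (Finset.ne_of_mem_erase hi) (hdisj _ i L h hinr1)
    rw [if_neg h0i, if_neg h1i, if_neg (by decide : ¬ ((1 : Fin 2) = 0))] at hgood
    linarith
  have heq : ∀ i ∈ Finset.univ.erase L, (∑ j ∈ (A i).toLeft, a j) = T := by
    have hzero : ∑ i ∈ Finset.univ.erase L, ((∑ j ∈ (A i).toLeft, a j) - T) = 0 := by
      rw [Finset.sum_sub_distrib, hsum_erase, Finset.sum_const, hcard_erase, nsmul_eq_mul]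
      ring
    intro i hi
    have h0 : (∑ j ∈ (A i).toLeft, a j) - T = 0 :=
      (Finset.sum_eq_zero_iff_of_nonneg (fun i hi => by linarith [hTleS i hi])).mp hzero i hi
    linarith
  refine ⟨hAL, fun i hi => ?_⟩
  have h0i : Sum.inr 0 ∉ A i := fun h => (hregne i hi) (hdisj _ i L h hinr0)
  have h1i : Sum.inr 1 ∉ A i := fun h => (hregne i hi) (hdisj _ i L h hinr1)
  rw [hVreg i hi, if_neg h0i, if_neg h1i,
    heq i (Finset.mem_erase.mpr ⟨hregne i hi, Finset.mem_univ i⟩)]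
  ring
end

section
/- For every fair division instance with two agents that have additive objective valuations over a finite item set M = G ∪ C (G the goods, C the chores), there exists an EQx allocation. -/
/-- EQx for additive objective valuations, where `G` is the set of goods and `C` the set of
chores: for all agents `i, j`, removing any good from `A j` brings `j`'s value down to at most
`i`'s value, and removing any chore from `A i` raises `i`'s value to at least `j`'s value. -/
def IsEQxObj {ι : Type*} [DecidableEq ι] {n : ℕ} (G C : Finset ι) (v : Fin n → ι → ℤ)
    (A : Fin n → Finset ι) : Prop :=
  ∀ i j : Fin n,
    (∀ g ∈ A j ∩ G, (∑ x ∈ A j, v j x) - v j g ≤ ∑ x ∈ A i, v i x) ∧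
    (∀ c ∈ A i ∩ C, (∑ x ∈ A i, v i x) - v i c ≥ ∑ x ∈ A j, v j x)

/-- Invariant of the allocation procedure, stated for one agent (with valuation `vA` and
bundle `A`) against the other (valuation `vB`, bundle `B`), with `R` the remaining items. -/
def EqxInv {ι : Type*} [DecidableEq ι] (G C : Finset ι) (vA vB : ι → ℤ)
    (A B R : Finset ι) : Prop :=
  (∀ h ∈ A ∩ G, (∑ x ∈ A, vA x) - vA h ≤ ∑ x ∈ B, vB x) ∧
  (∀ e ∈ A ∩ C, (∑ x ∈ B, vB x) ≤ (∑ x ∈ A, vA x) - vA e) ∧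
  (∀ h ∈ A ∩ G, ∀ x ∈ R ∩ G, vA x ≤ vA h) ∧
  (∀ e ∈ A ∩ C, ∀ y ∈ R ∩ C, vA e ≤ vA y) ∧
  (∀ e ∈ A ∩ C, ∀ x ∈ R ∩ G, vB x ≤ -vA e) ∧
  (∀ h ∈ A ∩ G, ∀ y ∈ R ∩ C, -vB y ≤ vA h)

section Steps

variable {ι : Type*} [DecidableEq ι] (G C : Finset ι)

lemma eqx_goodStep (hdisj : Disjoint G C) (R A B : Finset ι) (vA vB : ι → ℤ)
    (hGA : ∀ g ∈ G, 0 ≤ vA g)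
    (hord : (∑ x ∈ A, vA x) ≤ ∑ x ∈ B, vB x)
    (h1 : EqxInv G C vA vB A B R) (h2 : EqxInv G C vB vA B A R)
    (hAB : Disjoint A B) (hAR : Disjoint A R) (hBR : Disjoint B R)
    (g : ι) (hgR : g ∈ R) (hgG : g ∈ G)
    (hmax : ∀ x ∈ R ∩ G, vA x ≤ vA g)
    (hgood : ∀ y ∈ R ∩ C, -vB y ≤ vA g) :
    EqxInv G C vA vB (insert g A) B (R.erase g) ∧
    EqxInv G C vB vA B (insert g A) (R.erase g) ∧
    Disjoint (insert g A) B ∧ Disjoint (insert g A) (R.erase g) ∧ Disjoint B (R.erase g) := by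
  have hgA : g ∉ A := fun h => (Finset.disjoint_left.mp hAR h) hgR
  have hgB : g ∉ B := fun h => (Finset.disjoint_left.mp hBR h) hgR
  have hgC : g ∉ C := Finset.disjoint_left.mp hdisj hgG
  have hsum : (∑ x ∈ insert g A, vA x) = vA g + ∑ x ∈ A, vA x := Finset.sum_insert hgA
  obtain ⟨e1, e2, m1, m2, s1, s2⟩ := h1
  obtain ⟨f1, f2, n1, n2, t1, t2⟩ := h2
  have hErase : ∀ {x : ι} {S : Finset ι}, x ∈ R.erase g ∩ S → x ∈ R ∩ S := by
    intro x S hx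
    rcases Finset.mem_inter.mp hx with ⟨hx1, hx2⟩
    exact Finset.mem_inter.mpr ⟨(Finset.mem_erase.mp hx1).2, hx2⟩
  have hg0 : 0 ≤ vA g := hGA g hgG
  refine ⟨⟨?_, ?_, ?_, ?_, ?_, ?_⟩, ⟨?_, ?_, ?_, ?_, ?_, ?_⟩, ?_, ?_, ?_⟩
  · -- goods of insert g A
    intro h hh
    rcases Finset.mem_inter.mp hh with ⟨hh1, hhG⟩
    rw [hsum]
    rcases Finset.mem_insert.mp hh1 with rfl | hhA
    · linarith
    · have := e1 h (Finset.mem_inter.mpr ⟨hhA, hhG⟩)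
      have := m1 h (Finset.mem_inter.mpr ⟨hhA, hhG⟩) g (Finset.mem_inter.mpr ⟨hgR, hgG⟩)
      linarith
  · -- chores of insert g A
    intro e he
    rcases Finset.mem_inter.mp he with ⟨he1, heC⟩
    rw [hsum]
    rcases Finset.mem_insert.mp he1 with rfl | heA
    · exact absurd heC hgC
    · have := e2 e (Finset.mem_inter.mpr ⟨heA, heC⟩)
      linarith
  · -- M1
    intro h hh x hx
    rcases Finset.mem_inter.mp hh with ⟨hh1, hhG⟩
    have hx' := hErase hx
    rcases Finset.mem_insert.mp hh1 with rfl | hhA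
    · exact hmax x hx'
    · exact m1 h (Finset.mem_inter.mpr ⟨hhA, hhG⟩) x hx'
  · -- M2
    intro e he y hy
    rcases Finset.mem_inter.mp he with ⟨he1, heC⟩
    rcases Finset.mem_insert.mp he1 with rfl | heA
    · exact absurd heC hgC
    · exact m2 e (Finset.mem_inter.mpr ⟨heA, heC⟩) y (hErase hy)
  · -- star
    intro e he x hx
    rcases Finset.mem_inter.mp he with ⟨he1, heC⟩
    rcases Finset.mem_insert.mp he1 with rfl | heA
    · exact absurd heC hgC
    · exact s1 e (Finset.mem_inter.mpr ⟨heA, heC⟩) x (hErase hx)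
  · -- starstar
    intro h hh y hy
    rcases Finset.mem_inter.mp hh with ⟨hh1, hhG⟩
    rcases Finset.mem_insert.mp hh1 with rfl | hhA
    · exact hgood y (hErase hy)
    · exact s2 h (Finset.mem_inter.mpr ⟨hhA, hhG⟩) y (hErase hy)
  · -- goods of B
    intro h hh
    rw [hsum]
    have := f1 h hh
    linarith
  · -- chores of B
    intro e he
    rw [hsum]
    have := t1 e he g (Finset.mem_inter.mpr ⟨hgR, hgG⟩)
    linarith
  · -- M1 for B
    intro h hh x hx
    exact n1 h hh x (hErase hx)
  · -- M2 for B
    intro e he y hy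
    exact n2 e he y (hErase hy)
  · -- star for B
    intro e he x hx
    exact t1 e he x (hErase hx)
  · -- starstar for B
    intro h hh y hy
    exact t2 h hh y (hErase hy)
  · exact Finset.disjoint_insert_left.mpr ⟨hgB, hAB⟩
  · exact Finset.disjoint_insert_left.mpr
      ⟨fun h => (Finset.mem_erase.mp h).1 rfl, hAR.mono_right (Finset.erase_subset _ _)⟩
  · exact hBR.mono_right (Finset.erase_subset _ _)

lemma eqx_choreStep (hdisj : Disjoint G C) (R A B : Finset ι) (vA vB : ι → ℤ)
    (hCB : ∀ c ∈ C, vB c ≤ 0)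
    (hord : (∑ x ∈ A, vA x) ≤ ∑ x ∈ B, vB x)
    (h1 : EqxInv G C vA vB A B R) (h2 : EqxInv G C vB vA B A R)
    (hAB : Disjoint A B) (hAR : Disjoint A R) (hBR : Disjoint B R)
    (c : ι) (hcR : c ∈ R) (hcC : c ∈ C)
    (hmin : ∀ y ∈ R ∩ C, vB c ≤ vB y)
    (hchore : ∀ x ∈ R ∩ G, vA x ≤ -vB c) :
    EqxInv G C vA vB A (insert c B) (R.erase c) ∧
    EqxInv G C vB vA (insert c B) A (R.erase c) ∧
    Disjoint A (insert c B) ∧ Disjoint A (R.erase c) ∧ Disjoint (insert c B) (R.erase c) := by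
  have hcB : c ∉ B := fun h => (Finset.disjoint_left.mp hBR h) hcR
  have hcA : c ∉ A := fun h => (Finset.disjoint_left.mp hAR h) hcR
  have hcG : c ∉ G := fun h => (Finset.disjoint_left.mp hdisj h) hcC
  have hsum : (∑ x ∈ insert c B, vB x) = vB c + ∑ x ∈ B, vB x := Finset.sum_insert hcB
  obtain ⟨e1, e2, m1, m2, s1, s2⟩ := h1
  obtain ⟨f1, f2, n1, n2, t1, t2⟩ := h2
  have hErase : ∀ {x : ι} {S : Finset ι}, x ∈ R.erase c ∩ S → x ∈ R ∩ S := by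
    intro x S hx
    rcases Finset.mem_inter.mp hx with ⟨hx1, hx2⟩
    exact Finset.mem_inter.mpr ⟨(Finset.mem_erase.mp hx1).2, hx2⟩
  have hc0 : vB c ≤ 0 := hCB c hcC
  refine ⟨⟨?_, ?_, ?_, ?_, ?_, ?_⟩, ⟨?_, ?_, ?_, ?_, ?_, ?_⟩, ?_, ?_, ?_⟩
  · -- goods of A vs insert c B
    intro h hh
    rw [hsum]
    have := e1 h hh
    have := s2 h hh c (Finset.mem_inter.mpr ⟨hcR, hcC⟩)
    linarith
  · -- chores of A
    intro e he
    rw [hsum]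
    have := e2 e he
    linarith
  · intro h hh x hx; exact m1 h hh x (hErase hx)
  · intro e he y hy; exact m2 e he y (hErase hy)
  · intro e he x hx; exact s1 e he x (hErase hx)
  · intro h hh y hy; exact s2 h hh y (hErase hy)
  · -- goods of insert c B
    intro h hh
    rcases Finset.mem_inter.mp hh with ⟨hh1, hhG⟩
    rw [hsum]
    rcases Finset.mem_insert.mp hh1 with rfl | hhB
    · exact absurd hhG hcG
    · have := f1 h (Finset.mem_inter.mpr ⟨hhB, hhG⟩)
      linarith
  · -- chores of insert c B
    intro e he
    rcases Finset.mem_inter.mp he with ⟨he1, heC⟩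
    rw [hsum]
    rcases Finset.mem_insert.mp he1 with rfl | heB
    · linarith
    · have := n2 e (Finset.mem_inter.mpr ⟨heB, heC⟩) c (Finset.mem_inter.mpr ⟨hcR, hcC⟩)
      linarith
  · -- M1 for insert c B
    intro h hh x hx
    rcases Finset.mem_inter.mp hh with ⟨hh1, hhG⟩
    rcases Finset.mem_insert.mp hh1 with rfl | hhB
    · exact absurd hhG hcG
    · exact n1 h (Finset.mem_inter.mpr ⟨hhB, hhG⟩) x (hErase hx)
  · -- M2 for insert c B
    intro e he y hy
    rcases Finset.mem_inter.mp he with ⟨he1, heC⟩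
    rcases Finset.mem_insert.mp he1 with rfl | heB
    · exact hmin y (hErase hy)
    · exact n2 e (Finset.mem_inter.mpr ⟨heB, heC⟩) y (hErase hy)
  · -- star for insert c B
    intro e he x hx
    rcases Finset.mem_inter.mp he with ⟨he1, heC⟩
    rcases Finset.mem_insert.mp he1 with rfl | heB
    · exact hchore x (hErase hx)
    · exact t1 e (Finset.mem_inter.mpr ⟨heB, heC⟩) x (hErase hx)
  · -- starstar for insert c B
    intro h hh y hy
    rcases Finset.mem_inter.mp hh with ⟨hh1, hhG⟩
    rcases Finset.mem_insert.mp hh1 with rfl | hhB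
    · exact absurd hhG hcG
    · exact t2 h (Finset.mem_inter.mpr ⟨hhB, hhG⟩) y (hErase hy)
  · exact Finset.disjoint_insert_right.mpr ⟨hcA, hAB⟩
  · exact hAR.mono_right (Finset.erase_subset _ _)
  · exact Finset.disjoint_insert_left.mpr
      ⟨fun h => (Finset.mem_erase.mp h).1 rfl, hBR.mono_right (Finset.erase_subset _ _)⟩

/-- One step of the procedure: if the "poorer" agent `A`'s best remaining good is at least as
valuable as the magnitude of the "richer" agent `B`'s worst remaining chore, `A` takes that
good; otherwise `B` takes its worst remaining chore. -/
lemma eqx_step (hdisj : Disjoint G C) (R A B : Finset ι) (vA vB : ι → ℤ)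
    (hGA : ∀ g ∈ G, 0 ≤ vA g) (hCB : ∀ c ∈ C, vB c ≤ 0)
    (hRGC : R ⊆ G ∪ C) (hRne : R.Nonempty)
    (hord : (∑ x ∈ A, vA x) ≤ ∑ x ∈ B, vB x)
    (h1 : EqxInv G C vA vB A B R) (h2 : EqxInv G C vB vA B A R)
    (hAB : Disjoint A B) (hAR : Disjoint A R) (hBR : Disjoint B R) :
    ∃ A' B' R', A ⊆ A' ∧ B ⊆ B' ∧ A' ∪ B' ∪ R' = A ∪ B ∪ R ∧ R'.card + 1 = R.card ∧
      R' ⊆ G ∪ C ∧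
      EqxInv G C vA vB A' B' R' ∧ EqxInv G C vB vA B' A' R' ∧
      Disjoint A' B' ∧ Disjoint A' R' ∧ Disjoint B' R' := by
  have cover : ∀ z ∈ R, (insert z A ∪ B ∪ R.erase z = A ∪ B ∪ R) ∧
      (A ∪ insert z B ∪ R.erase z = A ∪ B ∪ R) := by
    intro z hz
    constructor <;>
    · ext x
      simp only [Finset.mem_union, Finset.mem_insert, Finset.mem_erase]
      by_cases hx : x = z
      · subst hx; simp [hz]
      · tauto
  have hcard : ∀ z ∈ R, (R.erase z).card + 1 = R.card := fun z hz =>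
    Finset.card_erase_add_one hz
  have hRsub : ∀ z : ι, R.erase z ⊆ G ∪ C := fun z =>
    (Finset.erase_subset _ _).trans hRGC
  by_cases hRG : (R ∩ G).Nonempty
  · obtain ⟨g, hg, hmax⟩ := Finset.exists_max_image (R ∩ G) vA hRG
    rcases Finset.mem_inter.mp hg with ⟨hgR, hgG⟩
    by_cases hcond : ∀ y ∈ R ∩ C, -vB y ≤ vA g
    · -- good step
      obtain ⟨i1, i2, d1, d2, d3⟩ := eqx_goodStep G C hdisj R A B vA vB hGA hord h1 h2
        hAB hAR hBR g hgR hgG hmax hcond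
      exact ⟨insert g A, B, R.erase g, Finset.subset_insert _ _, subset_rfl,
        (cover g hgR).1, hcard g hgR, hRsub g, i1, i2, d1, d2, d3⟩
    · -- chore step
      push_neg at hcond
      obtain ⟨y, hy, hylt⟩ := hcond
      obtain ⟨c, hc, hmin⟩ := Finset.exists_min_image (R ∩ C) vB ⟨y, hy⟩
      rcases Finset.mem_inter.mp hc with ⟨hcR, hcC⟩
      have hchore : ∀ x ∈ R ∩ G, vA x ≤ -vB c := by
        intro x hx
        have h1' := hmax x hx
        have h2' := hmin y hy
        linarith
      obtain ⟨i1, i2, d1, d2, d3⟩ := eqx_choreStep G C hdisj R A B vA vB hCB hord h1 h2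
        hAB hAR hBR c hcR hcC hmin hchore
      exact ⟨A, insert c B, R.erase c, subset_rfl, Finset.subset_insert _ _,
        (cover c hcR).2, hcard c hcR, hRsub c, i1, i2, d1, d2, d3⟩
  · -- no remaining goods: chore step
    have hRC : (R ∩ C).Nonempty := by
      obtain ⟨z, hz⟩ := hRne
      rcases Finset.mem_union.mp (hRGC hz) with hzG | hzC
      · exact absurd ⟨z, Finset.mem_inter.mpr ⟨hz, hzG⟩⟩ hRG
      · exact ⟨z, Finset.mem_inter.mpr ⟨hz, hzC⟩⟩
    obtain ⟨c, hc, hmin⟩ := Finset.exists_min_image (R ∩ C) vB hRC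
    rcases Finset.mem_inter.mp hc with ⟨hcR, hcC⟩
    have hchore : ∀ x ∈ R ∩ G, vA x ≤ -vB c := by
      intro x hx
      exact absurd ⟨x, hx⟩ hRG
    obtain ⟨i1, i2, d1, d2, d3⟩ := eqx_choreStep G C hdisj R A B vA vB hCB hord h1 h2
      hAB hAR hBR c hcR hcC hmin hchore
    exact ⟨A, insert c B, R.erase c, subset_rfl, Finset.subset_insert _ _,
      (cover c hcR).2, hcard c hcR, hRsub c, i1, i2, d1, d2, d3⟩

/-- Main induction: any state satisfying the invariants can be completed. -/
lemma eqx_rec (hdisj : Disjoint G C) :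
    ∀ (n : ℕ) (R A B : Finset ι) (vA vB : ι → ℤ),
      R.card = n →
      (∀ g ∈ G, 0 ≤ vA g) → (∀ g ∈ G, 0 ≤ vB g) →
      (∀ c ∈ C, vA c ≤ 0) → (∀ c ∈ C, vB c ≤ 0) →
      R ⊆ G ∪ C →
      EqxInv G C vA vB A B R → EqxInv G C vB vA B A R →
      Disjoint A B → Disjoint A R → Disjoint B R →
      ∃ A' B', A ⊆ A' ∧ B ⊆ B' ∧ A' ∪ B' = A ∪ B ∪ R ∧ Disjoint A' B' ∧
        EqxInv G C vA vB A' B' ∅ ∧ EqxInv G C vB vA B' A' ∅ := by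
  intro n
  induction n with
  | zero =>
    intro R A B vA vB hcard _ _ _ _ _ h1 h2 hAB _ _
    have hR : R = ∅ := Finset.card_eq_zero.mp hcard
    subst hR
    exact ⟨A, B, subset_rfl, subset_rfl, by simp, hAB, h1, h2⟩
  | succ n ih =>
    intro R A B vA vB hcard hGA hGB hCA hCB hRGC h1 h2 hAB hAR hBR
    have hRne : R.Nonempty := by
      rw [← Finset.card_pos, hcard]; omega
    rcases le_total (∑ x ∈ A, vA x) (∑ x ∈ B, vB x) with hord | hord
    · obtain ⟨A', B', R', hsubA, hsubB, hcover, hcard', hR'GC, i1, i2, d1, d2, d3⟩ :=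
        eqx_step G C hdisj R A B vA vB hGA hCB hRGC hRne hord h1 h2 hAB hAR hBR
      have hcardR' : R'.card = n := by omega
      obtain ⟨A'', B'', hsA, hsB, hcov, hd, j1, j2⟩ :=
        ih R' A' B' vA vB hcardR' hGA hGB hCA hCB hR'GC i1 i2 d1 d2 d3
      refine ⟨A'', B'', hsubA.trans hsA, hsubB.trans hsB, ?_, hd, j1, j2⟩
      rw [hcov, ← hcover]
    · obtain ⟨B', A', R', hsubB, hsubA, hcover, hcard', hR'GC, i1, i2, d1, d2, d3⟩ :=
        eqx_step G C hdisj R B A vB vA hGB hCA hRGC hRne hord h2 h1 hAB.symm hBR hAR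
      have hcardR' : R'.card = n := by omega
      obtain ⟨B'', A'', hsB, hsA, hcov, hd, j1, j2⟩ :=
        ih R' B' A' vB vA hcardR' hGB hGA hCB hCA hR'GC i1 i2 d1 d2 d3
      refine ⟨A'', B'', hsubA.trans hsA, hsubB.trans hsB, ?_, hd.symm, j2, j1⟩
      rw [Finset.union_comm A'' B'', hcov, hcover]
      ext x
      simp only [Finset.mem_union]
      tauto

end Steps

/-- For two agents with additive objective valuations, an EQx allocation always exists. -/
theorem eqx_exists_two_agents_objective
    {ι : Type*} [Fintype ι] [DecidableEq ι]
    (G C : Finset ι) (hGC : G ∪ C = Finset.univ) (hdisj : Disjoint G C)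
    (v : Fin 2 → ι → ℤ)
    (hG : ∀ g ∈ G, ∀ i : Fin 2, 0 ≤ v i g) (hC : ∀ c ∈ C, ∀ i : Fin 2, v i c ≤ 0) :
    ∃ A : Fin 2 → Finset ι, IsAllocation A ∧ IsEQxObj G C v A := by
  have hinv0 : ∀ (vA vB : ι → ℤ), EqxInv G C vA vB ∅ ∅ (Finset.univ : Finset ι) := by
    intro vA vB
    refine ⟨?_, ?_, ?_, ?_, ?_, ?_⟩ <;> intro h hh <;> simp at hh
  obtain ⟨A', B', _, _, hcover, hd, j1, j2⟩ :=
    eqx_rec G C hdisj (Finset.univ : Finset ι).card Finset.univ ∅ ∅ (v 0) (v 1) rfl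
      (fun g hg => hG g hg 0) (fun g hg => hG g hg 1)
      (fun c hc => hC c hc 0) (fun c hc => hC c hc 1)
      (by rw [hGC]) (hinv0 _ _) (hinv0 _ _) (by simp) (by simp) (by simp)
  have hcover' : A' ∪ B' = Finset.univ := by simpa using hcover
  obtain ⟨ja, jb, _, _, _, _⟩ := j1
  obtain ⟨ka, kb, _, _, _, _⟩ := j2
  refine ⟨![A', B'], ⟨?_, ?_⟩, ?_⟩
  · intro i j hij
    fin_cases i <;> fin_cases j
    · exact absurd rfl hij
    · simpa using hd
    · simpa using hd.symm
    · exact absurd rfl hij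
  · intro x
    have hx : x ∈ A' ∪ B' := by rw [hcover']; exact Finset.mem_univ x
    rcases Finset.mem_union.mp hx with hx | hx
    · exact ⟨0, by simpa using hx⟩
    · exact ⟨1, by simpa using hx⟩
  · have diag : ∀ (S : Finset ι) (w : ι → ℤ), (∀ g ∈ S ∩ G, 0 ≤ w g) → (∀ c ∈ S ∩ C, w c ≤ 0) →
        ((∀ g ∈ S ∩ G, (∑ x ∈ S, w x) - w g ≤ ∑ x ∈ S, w x) ∧
         (∀ c ∈ S ∩ C, (∑ x ∈ S, w x) - w c ≥ ∑ x ∈ S, w x)) := by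
      intro S w hg hc
      constructor
      · intro g hgm; have := hg g hgm; linarith
      · intro c hcm; have := hc c hcm; linarith
    intro i j
    fin_cases i <;> fin_cases j <;> simp only [Matrix.cons_val_zero, Matrix.cons_val_one,
      Matrix.head_cons, Fin.mk_zero, Fin.mk_one, Fin.isValue]
    · exact diag A' (v 0) (fun g hgm => hG g (Finset.mem_inter.mp hgm).2 0)
        (fun c hcm => hC c (Finset.mem_inter.mp hcm).2 0)
    · exact ⟨fun g hg => ka g hg, fun c hc => jb c hc⟩
    · exact ⟨fun g hg => ja g hg, fun c hc => kb c hc⟩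
    · exact diag B' (v 1) (fun g hgm => hG g (Finset.mem_inter.mp hgm).2 1)
        (fun c hcm => hC c (Finset.mem_inter.mp hcm).2 1)
end

section
/- For every fair division instance with n agents that have additive objective valuations over a finite item set M = G ∪ C, if the agents value the chores identically (v_i(c) = v_j(c) for all agents i, j and every chore c ∈ C), then there exists an EQx allocation. -/
/-- Moving one item `t` from bundle `p` to bundle `q` preserves being an allocation. -/
lemma move_isAllocation {ι : Type*} [DecidableEq ι] {n : ℕ} {A : Fin n → Finset ι}
    (hA : IsAllocation A) {p q : Fin n} (hpq : p ≠ q) {t : ι} (ht : t ∈ A p) :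
    IsAllocation (fun k =>
      if k = p then (A p).erase t else if k = q then insert t (A q) else A k) := by
  obtain ⟨hd, hcov⟩ := hA
  have key : ∀ k a, a ∈ (if k = p then (A p).erase t else if k = q then insert t (A q) else A k) →
      (a = t → k = q) ∧ (a ≠ t → a ∈ A k) := by
    intro k a hk
    split_ifs at hk with hkp hkq
    · subst hkp
      rw [Finset.mem_erase] at hk
      exact ⟨fun h => absurd h hk.1, fun _ => hk.2⟩
    · subst hkq
      rw [Finset.mem_insert] at hk
      refine ⟨fun _ => rfl, fun hat => ?_⟩
      rcases hk with h | h
      · exact absurd h hat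
      · exact h
    · refine ⟨fun hat => ?_, fun _ => hk⟩
      subst hat
      exact absurd hk (Finset.disjoint_left.mp (hd p k (fun h => hkp h.symm)) ht)
  constructor
  · intro i j hij
    rw [Finset.disjoint_left]
    intro a hai haj
    simp only at hai haj
    by_cases hat : a = t
    · exact hij (((key i a hai).1 hat).trans ((key j a haj).1 hat).symm)
    · exact Finset.disjoint_left.mp (hd i j hij) ((key i a hai).2 hat) ((key j a haj).2 hat)
  · intro x
    by_cases hx : x = t
    · refine ⟨q, ?_⟩
      have hqp : ¬ (q = p) := hpq.symm
      simp [hqp, hx]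
    · obtain ⟨k, hk⟩ := hcov x
      by_cases hkp : k = p
      · refine ⟨p, ?_⟩
        have hxp : x ∈ A p := hkp ▸ hk
        simp [hx, hxp]
      · refine ⟨k, ?_⟩
        by_cases hkq : k = q
        · subst hkq
          simp [hkp, hk]
        · simp [hkp, hkq, hk]

/-- Key numeric lemma for the potential function. -/
lemma pow_key {B x y x' y' : ℤ} (hx' : x' ≤ B) (h1 : x < x') (h2 : x < y') :
    2 ^ (B - x').toNat + 2 ^ (B - y').toNat
      < 2 ^ (B - x).toNat + 2 ^ (B - y).toNat := by
  set e := (B - x).toNat with he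
  have h3 : (B - x').toNat ≤ e - 1 := by omega
  have h4 : (B - y').toNat ≤ e - 1 := by omega
  have h5 : 1 ≤ e := by omega
  have hb : 2 ^ (B - x').toNat + 2 ^ (B - y').toNat ≤ 2 ^ (e - 1) + 2 ^ (e - 1) :=
    add_le_add (Nat.pow_le_pow_right (by norm_num) h3) (Nat.pow_le_pow_right (by norm_num) h4)
  have heq : 2 ^ (e - 1) + 2 ^ (e - 1) = 2 ^ e := by
    have h7 : (2 : ℕ) ^ e = 2 ^ (e - 1) * 2 := by
      rw [← pow_succ]
      congr 1
      omega
    linarith [h7]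
  calc 2 ^ (B - x').toNat + 2 ^ (B - y').toNat ≤ 2 ^ e := by rw [← heq]; exact hb
    _ < 2 ^ e + 2 ^ (B - y).toNat :=
        Nat.lt_add_of_pos_right (pow_pos (by norm_num) _)

/-- Existence of EQx allocations when all goods are strictly positive and all chores strictly
negative (and chores are identically valued). -/
lemma eqx_exists_strict {ι : Type*} [Fintype ι] [DecidableEq ι] {n : ℕ} (hn : 0 < n)
    (G C : Finset ι) (v : Fin n → ι → ℤ)
    (hG : ∀ g ∈ G, ∀ i : Fin n, 0 < v i g) (hC : ∀ c ∈ C, ∀ i : Fin n, v i c < 0)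
    (hident : ∀ c ∈ C, ∀ i j : Fin n, v i c = v j c) :
    ∃ A : Fin n → Finset ι, IsAllocation A ∧ IsEQxObj G C v A := by
  classical
  -- a bound on every possible bundle value
  set B : ℤ := ∑ x : ι, ∑ k : Fin n, |v k x| with hB
  have hbound : ∀ (S : Finset ι) (k : Fin n), ∑ x ∈ S, v k x ≤ B := by
    intro S k
    calc ∑ x ∈ S, v k x ≤ ∑ x ∈ S, |v k x| :=
          Finset.sum_le_sum fun x _ => le_abs_self _
      _ ≤ ∑ x ∈ S, ∑ k' : Fin n, |v k' x| :=
          Finset.sum_le_sum fun x _ =>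
            Finset.single_le_sum (fun k' _ => abs_nonneg (v k' x)) (Finset.mem_univ k)
      _ ≤ B := Finset.sum_le_sum_of_subset_of_nonneg (Finset.subset_univ S)
          (fun x _ _ => Finset.sum_nonneg fun k' _ => abs_nonneg _)
  -- the potential
  set Φ : (Fin n → Finset ι) → ℕ :=
    fun A => ∑ k : Fin n, 2 ^ (B - ∑ x ∈ A k, v k x).toNat with hΦ
  -- a trivial allocation exists
  have hA₀ : IsAllocation
      (fun k : Fin n => if k = ⟨0, hn⟩ then Finset.univ else (∅ : Finset ι)) := by
    constructor
    · intro i j hij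
      simp only
      split_ifs with h1 h2 h2
      · exact absurd (h1.trans h2.symm) hij
      · exact Finset.disjoint_empty_right _
      · exact Finset.disjoint_empty_left _
      · exact Finset.disjoint_empty_left _
    · intro x
      exact ⟨⟨0, hn⟩, by simp⟩
  -- pick a Φ-minimal allocation
  obtain ⟨A, hAmem, hAmin⟩ :=
    Finset.exists_min_image (Finset.univ.filter (fun A : Fin n → Finset ι => IsAllocation A)) Φ
      ⟨_, Finset.mem_filter.mpr ⟨Finset.mem_univ _, hA₀⟩⟩
  have hA : IsAllocation A := (Finset.mem_filter.mp hAmem).2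
  refine ⟨A, hA, ?_⟩
  by_contra hnot
  rw [IsEQxObj] at hnot
  push_neg at hnot
  obtain ⟨i, j, hviol⟩ := hnot
  -- a strictly improving single-item move contradicts minimality
  have main : ∀ (p q : Fin n) (t : ι), p ≠ q → t ∈ A p →
      2 ^ (B - (∑ x ∈ A p, v p x - v p t)).toNat
        + 2 ^ (B - (∑ x ∈ A q, v q x + v q t)).toNat
      < 2 ^ (B - ∑ x ∈ A p, v p x).toNat + 2 ^ (B - ∑ x ∈ A q, v q x).toNat →
      False := by
    intro p q t hpq ht hlt
    set A' : Fin n → Finset ι := fun k =>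
      if k = p then (A p).erase t else if k = q then insert t (A q) else A k with hA'
    have hAlloc' : IsAllocation A' := move_isAllocation ⟨hA.1, hA.2⟩ hpq ht
    have htq : t ∉ A q := Finset.disjoint_left.mp (hA.1 p q hpq) ht
    have hAep : A' p = (A p).erase t := by simp [hA']
    have hAiq : A' q = insert t (A q) := by
      have hqp : ¬ (q = p) := hpq.symm
      simp [hA', hqp]
    have hsp : ∑ x ∈ A' p, v p x = ∑ x ∈ A p, v p x - v p t := by
      rw [hAep]
      exact Finset.sum_erase_eq_sub ht
    have hsq : ∑ x ∈ A' q, v q x = ∑ x ∈ A q, v q x + v q t := by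
      rw [hAiq, Finset.sum_insert htq]
      ring
    have hsk : ∀ k, k ≠ p → k ≠ q → A' k = A k := by
      intro k hkp hkq
      simp only [hA', if_neg hkp, if_neg hkq]
    have hΦlt : Φ A' < Φ A := by
      have hq_mem : q ∈ (Finset.univ : Finset (Fin n)).erase p :=
        Finset.mem_erase.mpr ⟨hpq.symm, Finset.mem_univ q⟩
      have expand : ∀ (f : Fin n → ℕ),
          ∑ k : Fin n, f k
            = f p + (f q + ∑ k ∈ ((Finset.univ : Finset (Fin n)).erase p).erase q, f k) := by
        intro f
        rw [Finset.add_sum_erase _ f hq_mem, Finset.add_sum_erase _ f (Finset.mem_univ p)]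
      simp only [hΦ]
      rw [expand (fun k => 2 ^ (B - ∑ x ∈ A' k, v k x).toNat),
          expand (fun k => 2 ^ (B - ∑ x ∈ A k, v k x).toNat)]
      have htails : ∑ k ∈ ((Finset.univ : Finset (Fin n)).erase p).erase q,
            2 ^ (B - ∑ x ∈ A' k, v k x).toNat
          = ∑ k ∈ ((Finset.univ : Finset (Fin n)).erase p).erase q,
            2 ^ (B - ∑ x ∈ A k, v k x).toNat := by
        refine Finset.sum_congr rfl fun k hk => ?_
        rw [hsk k (Finset.mem_erase.mp (Finset.mem_erase.mp hk).2).1 (Finset.mem_erase.mp hk).1]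
      rw [hsp, hsq, htails]
      linarith [hlt]
    have hmem' : A' ∈ Finset.univ.filter (fun A : Fin n → Finset ι => IsAllocation A) :=
      Finset.mem_filter.mpr ⟨Finset.mem_univ _, hAlloc'⟩
    exact absurd (hAmin A' hmem') (not_le.mpr hΦlt)
  by_cases hgoodok : ∀ g ∈ A j ∩ G, (∑ x ∈ A j, v j x) - v j g ≤ ∑ x ∈ A i, v i x
  case neg =>
    -- goods violation : g ∈ A j ∩ G with ∑ (A i) < ∑ (A j) - v j g
    push_neg at hgoodok
    obtain ⟨g, hg, hlt'⟩ := hgoodok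
    have hlt : ∑ x ∈ A i, v i x < (∑ x ∈ A j, v j x) - v j g := hlt'
    have hgG : g ∈ G := (Finset.mem_inter.mp hg).2
    have hgj : g ∈ A j := (Finset.mem_inter.mp hg).1
    have hji : j ≠ i := by
      rintro rfl
      have := hG g hgG j
      omega
    have hgi : g ∉ A i := Finset.disjoint_left.mp (hA.1 j i hji) hgj
    have hx' : ∑ x ∈ A i, v i x + v i g ≤ B := by
      have h := hbound (insert g (A i)) i
      rw [Finset.sum_insert hgi] at h
      linarith
    have h1 : ∑ x ∈ A i, v i x < ∑ x ∈ A i, v i x + v i g := by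
      have := hG g hgG i
      linarith
    have hkey := pow_key (B := B) (x := ∑ x ∈ A i, v i x) (y := ∑ x ∈ A j, v j x)
      (x' := ∑ x ∈ A i, v i x + v i g) (y' := ∑ x ∈ A j, v j x - v j g) hx' h1 hlt
    exact main j i g hji hgj (by linarith)
  case pos =>
    -- chores violation : c ∈ A i ∩ C with ∑ (A i) - v i c < ∑ (A j)
    obtain ⟨c, hc, hlt⟩ := hviol hgoodok
    have hcC : c ∈ C := (Finset.mem_inter.mp hc).2
    have hci : c ∈ A i := (Finset.mem_inter.mp hc).1
    have hij : i ≠ j := by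
      rintro rfl
      have := hC c hcC i
      omega
    have hx' : ∑ x ∈ A i, v i x - v i c ≤ B := by
      have h := hbound ((A i).erase c) i
      rw [Finset.sum_erase_eq_sub hci] at h
      linarith
    have h1 : ∑ x ∈ A i, v i x < ∑ x ∈ A i, v i x - v i c := by
      have := hC c hcC i
      linarith
    have h2 : ∑ x ∈ A i, v i x < ∑ x ∈ A j, v j x + v j c := by
      have := hident c hcC i j
      linarith
    have hkey := pow_key (B := B) (x := ∑ x ∈ A i, v i x) (y := ∑ x ∈ A j, v j x)
      (x' := ∑ x ∈ A i, v i x - v i c) (y' := ∑ x ∈ A j, v j x + v j c) hx' h1 h2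
    exact main i j c hij hci (by linarith)

/-- For `n` agents with additive objective valuations that value the chores identically,
an EQx allocation always exists. -/
theorem eqx_exists_identical_chores
    {ι : Type*} [Fintype ι] [DecidableEq ι] {n : ℕ} (hn : 0 < n)
    (G C : Finset ι) (hGC : G ∪ C = Finset.univ) (hdisj : Disjoint G C)
    (v : Fin n → ι → ℤ)
    (hG : ∀ g ∈ G, ∀ i : Fin n, 0 ≤ v i g) (hC : ∀ c ∈ C, ∀ i : Fin n, v i c ≤ 0)
    (hident : ∀ c ∈ C, ∀ i j : Fin n, v i c = v j c) :
    ∃ A : Fin n → Finset ι, IsAllocation A ∧ IsEQxObj G C v A := by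
  classical
  set K : ℤ := (Fintype.card ι : ℤ) with hK
  have hK0 : 0 ≤ K := Int.natCast_nonneg _
  set N : ℤ := 2 * K + 2 with hN
  have hN0 : 0 < N := by omega
  set v' : Fin n → ι → ℤ := fun i x => N * v i x + (if x ∈ G then 1 else -1) with hv'
  have hG' : ∀ g ∈ G, ∀ i : Fin n, 0 < v' i g := by
    intro g hg i
    have h1 : 0 ≤ N * v i g := mul_nonneg (le_of_lt hN0) (hG g hg i)
    simp only [hv', if_pos hg]
    linarith
  have hC' : ∀ c ∈ C, ∀ i : Fin n, v' i c < 0 := by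
    intro c hc i
    have hcG : c ∉ G := Finset.disjoint_right.mp hdisj hc
    have h1 : N * v i c ≤ 0 := mul_nonpos_of_nonneg_of_nonpos (le_of_lt hN0) (hC c hc i)
    simp only [hv', if_neg hcG]
    linarith
  have hident' : ∀ c ∈ C, ∀ i j : Fin n, v' i c = v' j c := by
    intro c hc i j
    simp only [hv', hident c hc i j]
  obtain ⟨A, hAlloc, hEQx⟩ := eqx_exists_strict hn G C v' hG' hC' hident'
  refine ⟨A, hAlloc, ?_⟩
  -- bound on the correction term
  have hψ : ∀ S : Finset ι, |∑ x ∈ S, (if x ∈ G then (1 : ℤ) else -1)| ≤ K := by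
    intro S
    calc |∑ x ∈ S, (if x ∈ G then (1 : ℤ) else -1)|
        ≤ ∑ x ∈ S, |if x ∈ G then (1 : ℤ) else -1| := Finset.abs_sum_le_sum_abs _ _
      _ = ∑ x ∈ S, 1 := by
          refine Finset.sum_congr rfl fun x _ => ?_
          split_ifs <;> norm_num
      _ = (S.card : ℤ) := by simp
      _ ≤ K := by
          rw [hK]
          exact_mod_cast Finset.card_le_univ S
  have hsum : ∀ (S : Finset ι) (k : Fin n),
      ∑ x ∈ S, v' k x = N * ∑ x ∈ S, v k x + ∑ x ∈ S, (if x ∈ G then (1 : ℤ) else -1) := by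
    intro S k
    simp only [hv']
    rw [Finset.sum_add_distrib, Finset.mul_sum]
  intro i j
  have h := hEQx i j
  constructor
  · intro g hg
    have hgG : g ∈ G := (Finset.mem_inter.mp hg).2
    have h1 := h.1 g hg
    rw [hsum, hsum] at h1
    simp only [hv', if_pos hgG] at h1
    have hψi := hψ (A i)
    have hψj := hψ (A j)
    -- N * (Sj - v j g - Si) ≤ ψi - ψj + 1 ≤ 2K + 1 < N
    by_contra hcon
    push_neg at hcon
    have hd1 : 1 ≤ (∑ x ∈ A j, v j x) - v j g - ∑ x ∈ A i, v i x := by omega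
    have hmul := mul_le_mul_of_nonneg_left hd1 (le_of_lt hN0)
    have hexp : N * ((∑ x ∈ A j, v j x) - v j g - ∑ x ∈ A i, v i x)
        = N * ∑ x ∈ A j, v j x - N * v j g - N * ∑ x ∈ A i, v i x := by ring
    have hai := abs_le.mp hψi
    have haj := abs_le.mp hψj
    linarith [h1, hmul, hexp, hai.1, hai.2, haj.1, haj.2, hN0]
  · intro c hc
    have hcC : c ∈ C := (Finset.mem_inter.mp hc).2
    have hcG : c ∉ G := Finset.disjoint_right.mp hdisj hcC
    have h2 := h.2 c hc
    rw [hsum, hsum] at h2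
    simp only [hv', if_neg hcG] at h2
    have hψi := hψ (A i)
    have hψj := hψ (A j)
    by_contra hcon
    push_neg at hcon
    have hd1 : 1 ≤ (∑ x ∈ A j, v j x) - ((∑ x ∈ A i, v i x) - v i c) := by omega
    have hmul := mul_le_mul_of_nonneg_left hd1 (le_of_lt hN0)
    have hexp : N * ((∑ x ∈ A j, v j x) - ((∑ x ∈ A i, v i x) - v i c))
        = N * ∑ x ∈ A j, v j x - N * ∑ x ∈ A i, v i x + N * v i c := by ring
    have hai := abs_le.mp hψi
    have haj := abs_le.mp hψj
    linarith [h2, hmul, hexp, hai.1, hai.2, haj.1, haj.2, hN0]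
end

section
/- Let (A_1, …, A_n) be an allocation under additive objective valuations, and suppose agent i holds a good g ∈ A_i ∩ G with v_i(A_i) − v_i(g) > min_k v_k(A_k) (a goods violation). Let p be a poorest agent, i.e., v_p(A_p) = min_k v_k(A_k), and let (B_1, …, B_n) be obtained by transferring g from agent i to agent p (B_i = A_i \ {g}, B_p = A_p ∪ {g}, and B_k = A_k for all other k). Then p ≠ i and min_k v_k(B_k) ≥ min_k v_k(A_k). -/
/-- The minimum value of an agent for its own bundle in the allocation `A`. -/
def minVal {ι : Type*} {n : ℕ} (hn : 0 < n) (v : Fin n → ι → ℤ)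
    (A : Fin n → Finset ι) : ℤ :=
  Finset.univ.inf' (Finset.univ_nonempty_iff.mpr ⟨⟨0, hn⟩⟩) (fun k => ∑ x ∈ A k, v k x)

/-- Resolving a goods violation by transferring the violating good `g` to a poorest agent `p`
moves it away from `i` (i.e. `p ≠ i`) and does not decrease the minimum value. -/
theorem goods_violation_transfer
    {ι : Type*} [Fintype ι] [DecidableEq ι] {n : ℕ} (hn : 0 < n)
    (G C : Finset ι) (hGC : G ∪ C = Finset.univ) (hdisj : Disjoint G C)
    (v : Fin n → ι → ℤ)
    (hG : ∀ g ∈ G, ∀ i : Fin n, 0 ≤ v i g) (hC : ∀ c ∈ C, ∀ i : Fin n, v i c ≤ 0)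
    (A : Fin n → Finset ι) (hA : IsAllocation A)
    (i p : Fin n) (g : ι) (hg : g ∈ A i ∩ G)
    (hviol : (∑ x ∈ A i, v i x) - v i g > minVal hn v A)
    (hp : ∑ x ∈ A p, v p x = minVal hn v A)
    (B : Fin n → Finset ι)
    (hBi : B i = (A i).erase g) (hBp : B p = insert g (A p))
    (hBk : ∀ k : Fin n, k ≠ i → k ≠ p → B k = A k) :
    p ≠ i ∧ minVal hn v A ≤ minVal hn v B := by
  obtain ⟨hgA, hgG⟩ := Finset.mem_inter.mp hg
  have hvg : 0 ≤ v p g := hG g hgG p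
  have hvig : 0 ≤ v i g := hG g hgG i
  have hpi : p ≠ i := by
    intro h; subst h
    have := hviol
    rw [hp] at this
    omega
  refine ⟨hpi, ?_⟩
  apply Finset.le_inf'
  intro k _
  by_cases hk : k = i
  · subst hk
    rw [hBi, Finset.sum_erase_eq_sub hgA]
    omega
  · by_cases hk' : k = p
    · subst hk'
      have hgp : g ∉ A k := by
        intro h
        simpa using (hA.1 k i hpi).le_bot (Finset.mem_inter.mpr ⟨h, hgA⟩)
      rw [hBp, Finset.sum_insert hgp, hp]
      omega
    · rw [hBk k hk hk']
      have : minVal hn v A ≤ ∑ x ∈ A k, v k x :=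
        Finset.inf'_le _ (Finset.mem_univ k)
      exact this
end

section
/- For every fair division instance with n agents that have additive objective valuations over a finite item set M = G ∪ C, if the agents value the goods identically (v_i(g) = v_j(g) for all agents i, j and every good g ∈ G), then there exists an EQx allocation. -/
/-!
Local search over assignments `f : ι → Fin n` of items to agents. With `u` the vector of values
and `M` its maximum, order assignments lexicographically by `M`, the number of agents at `M`,
`∑ₐ (M - uₐ)²`, and the number of items at which EQx fails; a minimal assignment is EQx.
A violating good of positive (common) value moves from its holder to a poorest agent: this
lowers an agent at `M`, or is a transfer that shrinks `∑ₐ (M - uₐ)²`. A violating chore moves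
to a richest agent: this lowers that agent, or raises the holder towards `M` at no cost. An item
worth `0` to both its old and new holder moves without changing any value, and there it no
longer violates EQx.
-/

open Finset Function

namespace EQx

section MaxPotential

variable {α : Type*} [Fintype α] [Nonempty α]

def maxValue (u : α → ℤ) : ℤ := univ.sup' univ_nonempty u

lemma le_maxValue (u : α → ℤ) (a : α) : u a ≤ maxValue u := le_sup' u (mem_univ a)

lemma maxValue_le {u : α → ℤ} {M : ℤ} (h : ∀ a, u a ≤ M) : maxValue u ≤ M :=
  sup'_le _ _ fun a _ => h a

lemma exists_eq_maxValue (u : α → ℤ) : ∃ a, u a = maxValue u := by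
  obtain ⟨a, -, ha⟩ := exists_mem_eq_sup' univ_nonempty u
  exact ⟨a, ha.symm⟩

def maxPotential (u : α → ℤ) : ℤ ×ₗ ℕ ×ₗ ℤ :=
  toLex (maxValue u, toLex (#{a | u a = maxValue u}, ∑ a, (maxValue u - u a) ^ 2))

lemma maxPotential_lt_of_max_drops {u u' : α → ℤ} (hle : ∀ a, u' a ≤ maxValue u)
    (hnew : ∀ a, u' a = maxValue u → u a = maxValue u)
    (hdrop : ∃ a, u a = maxValue u ∧ u' a < maxValue u) :
    maxPotential u' < maxPotential u := by
  obtain ⟨a, ha, ha'⟩ := hdrop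
  rcases (maxValue_le hle).lt_or_eq with hlt | heq
  · exact Prod.Lex.toLex_lt_toLex.mpr (Or.inl hlt)
  refine Prod.Lex.toLex_lt_toLex.mpr (Or.inr ⟨heq, Prod.Lex.toLex_lt_toLex.mpr (Or.inl ?_)⟩)
  simp only [heq]
  refine card_lt_card ((ssubset_iff_of_subset ?_).mpr ⟨a, ?_, ?_⟩)
  · exact fun b => by simpa using hnew b
  · simpa using ha
  · simpa using ha'.ne

lemma maxPotential_lt_of_sum_sq_lt {u u' : α → ℤ} (hle : ∀ a, u' a ≤ maxValue u)
    (hmax : ∀ a, u' a = maxValue u ↔ u a = maxValue u)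
    (hsq : ∑ a, (maxValue u - u' a) ^ 2 < ∑ a, (maxValue u - u a) ^ 2) :
    maxPotential u' < maxPotential u := by
  have heq : maxValue u' = maxValue u := by
    obtain ⟨a, ha⟩ := exists_eq_maxValue u
    exact (maxValue_le hle).antisymm (((hmax a).mpr ha).symm.trans_le (le_maxValue u' a))
  refine Prod.Lex.toLex_lt_toLex.mpr (Or.inr ⟨heq, Prod.Lex.toLex_lt_toLex.mpr (Or.inr ⟨?_, ?_⟩)⟩)
  · simp only [heq, hmax]
  · simpa only [heq] using hsq

lemma maxPotential_lt_of_pair_lt_max {u u' : α → ℤ} {s t : α}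
    (hoff : ∀ a, a ≠ s → a ≠ t → u' a = u a) (hs : u' s < maxValue u) (ht : u' t < maxValue u)
    (hmax : u s = maxValue u ∨ u t = maxValue u) : maxPotential u' < maxPotential u := by
  refine maxPotential_lt_of_max_drops (fun a => ?_) (fun a ha => ?_) ?_
  · rcases eq_or_ne a s with rfl | has; · exact hs.le
    rcases eq_or_ne a t with rfl | hat; · exact ht.le
    exact (hoff a has hat).trans_le (le_maxValue u a)
  · rcases eq_or_ne a s with rfl | has; · exact absurd ha hs.ne
    rcases eq_or_ne a t with rfl | hat; · exact absurd ha ht.ne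
    rwa [← hoff a has hat]
  · rcases hmax with h | h
    exacts [⟨s, h, hs⟩, ⟨t, h, ht⟩]

lemma maxPotential_lt_of_transfer {u u' : α → ℤ} {s t : α} {d : ℤ} (hst : s ≠ t)
    (hoff : ∀ a, a ≠ s → a ≠ t → u' a = u a) (hs : u' s = u s - d) (ht : u' t = u t + d)
    (hd : 0 < d) (hgap : u t + d < u s) (hsM : u s < maxValue u) :
    maxPotential u' < maxPotential u := by
  refine maxPotential_lt_of_sum_sq_lt (fun a => ?_) (fun a => ?_) ?_
  · rcases eq_or_ne a s with rfl | has; · linarith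
    rcases eq_or_ne a t with rfl | hat; · linarith
    exact (hoff a has hat).trans_le (le_maxValue u a)
  · rcases eq_or_ne a s with rfl | has; · constructor <;> intro <;> linarith
    rcases eq_or_ne a t with rfl | hat; · constructor <;> intro <;> linarith [le_maxValue u a]
    rw [hoff a has hat]
  · have hdiff : ∑ a, ((maxValue u - u' a) ^ 2 - (maxValue u - u a) ^ 2) =
        ((maxValue u - u' s) ^ 2 - (maxValue u - u s) ^ 2) +
          ((maxValue u - u' t) ^ 2 - (maxValue u - u t) ^ 2) :=
      Fintype.sum_eq_add s t hst fun a ha => by rw [hoff a ha.1 ha.2, sub_self]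
    rw [sum_sub_distrib, hs, ht] at hdiff
    nlinarith

lemma maxPotential_lt_of_raise {u u' : α → ℤ} {s : α} (hoff : ∀ a, a ≠ s → u' a = u a)
    (hraise : u s < u' s) (hsM : u' s < maxValue u) : maxPotential u' < maxPotential u := by
  refine maxPotential_lt_of_sum_sq_lt (fun a => ?_) (fun a => ?_) ?_
  · rcases eq_or_ne a s with rfl | has
    exacts [hsM.le, (hoff a has).trans_le (le_maxValue u a)]
  · rcases eq_or_ne a s with rfl | has
    · constructor <;> intro <;> linarith
    · rw [hoff a has]
  · refine sum_lt_sum (fun a _ => ?_) ⟨s, mem_univ s, by nlinarith⟩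
    rcases eq_or_ne a s with rfl | has
    · nlinarith
    · rw [hoff a has]

end MaxPotential

variable {ι : Type*} [Fintype ι] {n : ℕ}

section Value

variable (v : Fin n → ι → ℤ)

def value (f : ι → Fin n) (i : Fin n) : ℤ := ∑ x with f x = i, v i x

lemma isAllocation_fibers (f : ι → Fin n) : IsAllocation fun i => ({x | f x = i} : Finset ι) :=
  ⟨fun i j hij => disjoint_filter.mpr fun x _ hi hj => hij (hi.symm.trans hj),
    fun x => ⟨f x, by simp⟩⟩

variable [DecidableEq ι]

lemma value_update (f : ι → Fin n) (x : ι) (k i : Fin n) :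
    value v (update f x k) i =
      value v f i + (if k = i then v i x else 0) - (if f x = i then v i x else 0) := by
  simp only [value, sum_filter]
  rw [Fintype.sum_eq_add_sum_compl x, Fintype.sum_eq_add_sum_compl x (f := fun y => ite _ _ _),
    sum_congr rfl fun y hy => by rw [update_of_ne (by simpa using hy)], update_self]
  ring

variable {v} {f : ι → Fin n} {x : ι} {k : Fin n}

lemma value_update_of_ne {i : Fin n} (hx : i ≠ f x) (hk : i ≠ k) :
    value v (update f x k) i = value v f i := by
  simp [value_update, hk.symm, hx.symm]

lemma value_update_source (h : f x ≠ k) :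
    value v (update f x k) (f x) = value v f (f x) - v (f x) x := by
  simp [value_update, h.symm]

lemma value_update_target (h : f x ≠ k) : value v (update f x k) k = value v f k + v k x := by
  simp [value_update, h]

lemma value_update_eq_of_eq_zero (hsrc : v (f x) x = 0) (htgt : v k x = 0) :
    value v (update f x k) = value v f := by
  funext i
  rw [value_update]
  split_ifs with hk hx <;> subst_vars <;> simp [*]

end Value

variable (v : Fin n → ι → ℤ) (G C : Finset ι)

def Violated (f : ι → Fin n) (x : ι) : Prop :=
  x ∈ G ∧ (∃ a, value v f a < value v f (f x) - v (f x) x) ∨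
    x ∈ C ∧ (∃ a, value v f (f x) - v (f x) x < value v f a)

open Classical in
noncomputable def violatedCount (f : ι → Fin n) : ℕ := #{x | Violated v G C f x}

noncomputable def potential [Nonempty (Fin n)] (f : ι → Fin n) : (ℤ ×ₗ ℕ ×ₗ ℤ) ×ₗ ℕ :=
  toLex (maxPotential (value v f), violatedCount v G C f)

variable {v G C} {f : ι → Fin n}

lemma isEQxObj_of_forall_not_violated [DecidableEq ι] (h : ∀ x, ¬ Violated v G C f x) :
    IsEQxObj G C v fun i => {x | f x = i} := by
  refine fun i j => ⟨fun g hg => ?_, fun c hc => ?_⟩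
  · obtain ⟨hgj, hgG⟩ := mem_inter.mp hg
    obtain rfl : f g = j := (mem_filter.mp hgj).2
    exact not_lt.mp fun hlt => h g (Or.inl ⟨hgG, i, hlt⟩)
  · obtain ⟨hci, hcC⟩ := mem_inter.mp hc
    obtain rfl : f c = i := (mem_filter.mp hci).2
    exact not_lt.mp fun hlt => h c (Or.inr ⟨hcC, j, hlt⟩)

variable [Nonempty (Fin n)]

lemma potential_lt_of_maxPotential_lt {f' : ι → Fin n}
    (h : maxPotential (value v f') < maxPotential (value v f)) :
    potential v G C f' < potential v G C f :=
  Prod.Lex.toLex_lt_toLex.mpr (Or.inl h)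

variable [DecidableEq ι]

lemma potential_update_lt {x : ι} {k : Fin n} (hval : value v (update f x k) = value v f)
    (hx : Violated v G C f x) (hx' : ¬ Violated v G C (update f x k) x) :
    potential v G C (update f x k) < potential v G C f := by
  refine Prod.Lex.toLex_lt_toLex.mpr (Or.inr ⟨by rw [hval], ?_⟩)
  refine card_lt_card ((ssubset_iff_of_subset fun y hy => ?_).mpr ⟨x, by simpa using hx, by simpa⟩)
  simp only [mem_filter, mem_univ, true_and] at hy ⊢
  rcases eq_or_ne y x with rfl | hyx
  · exact absurd hy hx'
  · simpa only [Violated, update_of_ne hyx, hval] using hy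

lemma exists_potential_lt_of_good_violated {g : ι} (hgG : g ∈ G) (hgC : g ∉ C)
    (hg : ∀ i, 0 ≤ v i g) (hident : ∀ i j, v i g = v j g)
    (hviol : ∃ a, value v f a < value v f (f g) - v (f g) g) :
    ∃ f', potential v G C f' < potential v G C f := by
  obtain ⟨a, ha⟩ := hviol
  obtain ⟨m, -, hm⟩ := exists_min_image univ (value v f) univ_nonempty
  have hmj : value v f m + v (f g) g < value v f (f g) := by linarith [hm a (mem_univ a)]
  have hjm : f g ≠ m := fun h => by rw [h] at hmj; linarith [hg m]
  have hsrc := value_update_source (v := v) hjm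
  have htgt : value v (update f g m) m = value v f m + v (f g) g := by
    rw [value_update_target hjm, hident m]
  refine ⟨update f g m, ?_⟩
  rcases (hg (f g)).lt_or_eq with hpos | hzero
  · apply potential_lt_of_maxPotential_lt
    have hoff : ∀ i, i ≠ f g → i ≠ m → value v (update f g m) i = value v f i :=
      fun i => value_update_of_ne
    by_cases htop : value v f (f g) = maxValue (value v f)
    · exact maxPotential_lt_of_pair_lt_max hoff (by linarith) (by linarith) (Or.inl htop)
    · exact maxPotential_lt_of_transfer hjm hoff hsrc htgt hpos hmj
        ((le_maxValue _ _).lt_of_ne htop)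
  · have hval := value_update_eq_of_eq_zero (k := m) hzero.symm (by rw [hident m, hzero])
    refine potential_update_lt hval (Or.inl ⟨hgG, a, ha⟩) ?_
    rintro (⟨-, b, hb⟩ | ⟨hgC', -⟩)
    · rw [update_self, hval, hident m, ← hzero, sub_zero] at hb
      exact (hm b (mem_univ b)).not_gt hb
    · exact hgC hgC'

lemma exists_potential_lt_of_chore_violated {c : ι} (hcG : c ∉ G) (hcC : c ∈ C)
    (hc : ∀ i, v i c ≤ 0) (hviol : ∃ a, value v f (f c) - v (f c) c < value v f a) :
    ∃ f', potential v G C f' < potential v G C f := by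
  obtain ⟨a, ha⟩ := hviol
  obtain ⟨K, hK⟩ := exists_eq_maxValue (value v f)
  have haM := le_maxValue (value v f) a
  have hiK : f c ≠ K := fun h => by rw [h, hK] at ha; linarith [hc K]
  have hsrc := value_update_source (v := v) hiK
  have htgt := value_update_target (v := v) hiK
  have hoff : ∀ i, i ≠ f c → i ≠ K → value v (update f c K) i = value v f i :=
    fun i => value_update_of_ne
  refine ⟨update f c K, ?_⟩
  rcases (hc K).lt_or_eq with hKneg | hKzero
  · exact potential_lt_of_maxPotential_lt <|
      maxPotential_lt_of_pair_lt_max hoff (by linarith) (by linarith) (Or.inr hK)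
  rcases (hc (f c)).lt_or_eq with hineg | hizero
  · refine potential_lt_of_maxPotential_lt <| maxPotential_lt_of_raise (s := f c) (fun i hi => ?_)
      (by linarith) (by linarith)
    rcases eq_or_ne i K with rfl | hiK'
    · rw [htgt, hKzero, add_zero]
    · exact hoff i hi hiK'
  · have hval := value_update_eq_of_eq_zero hizero hKzero
    refine potential_update_lt hval (Or.inr ⟨hcC, a, ha⟩) ?_
    rintro (⟨hcG', -⟩ | ⟨-, b, hb⟩)
    · exact hcG hcG'
    · rw [update_self, hval, hKzero, sub_zero, hK] at hb
      exact (le_maxValue _ b).not_gt hb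

end EQx

theorem eqx_exists_identical_goods_general
    {ι : Type*} [Fintype ι] [DecidableEq ι] {n : ℕ} (hn : 0 < n)
    (G C : Finset ι) (hdisj : Disjoint G C)
    (v : Fin n → ι → ℤ)
    (hG : ∀ g ∈ G, ∀ i : Fin n, 0 ≤ v i g) (hC : ∀ c ∈ C, ∀ i : Fin n, v i c ≤ 0)
    (hident : ∀ g ∈ G, ∀ i j : Fin n, v i g = v j g) :
    ∃ A : Fin n → Finset ι, IsAllocation A ∧ IsEQxObj G C v A := by
  have : Nonempty (Fin n) := ⟨⟨0, hn⟩⟩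
  obtain ⟨f, -, hmin⟩ := exists_min_image univ (EQx.potential v G C) univ_nonempty
  have hnot_lt : ∀ f', ¬ EQx.potential v G C f' < EQx.potential v G C f :=
    fun f' => not_lt.mpr (hmin f' (mem_univ f'))
  have hnot_violated : ∀ x, ¬ EQx.Violated v G C f x := by
    rintro x (⟨hxG, hx⟩ | ⟨hxC, hx⟩)
    · obtain ⟨f', hlt⟩ := EQx.exists_potential_lt_of_good_violated hxG
        (disjoint_left.mp hdisj hxG) (hG x hxG) (hident x hxG) hx
      exact hnot_lt f' hlt
    · obtain ⟨f', hlt⟩ := EQx.exists_potential_lt_of_chore_violated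
        (disjoint_right.mp hdisj hxC) hxC (hC x hxC) hx
      exact hnot_lt f' hlt
  exact ⟨_, EQx.isAllocation_fibers f, EQx.isEQxObj_of_forall_not_violated hnot_violated⟩

/-- For `n` agents with additive objective valuations that value the goods identically,
an EQx allocation always exists. -/
theorem eqx_exists_identical_goods
    {ι : Type*} [Fintype ι] [DecidableEq ι] {n : ℕ} (hn : 0 < n)
    (G C : Finset ι) (hGC : G ∪ C = Finset.univ) (hdisj : Disjoint G C)
    (v : Fin n → ι → ℤ)
    (hG : ∀ g ∈ G, ∀ i : Fin n, 0 ≤ v i g) (hC : ∀ c ∈ C, ∀ i : Fin n, v i c ≤ 0)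
    (hident : ∀ g ∈ G, ∀ i j : Fin n, v i g = v j g) :
    ∃ A : Fin n → Finset ι, IsAllocation A ∧ IsEQxObj G C v A :=
  eqx_exists_identical_goods_general hn G C hdisj v hG hC hident
end
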